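/- arXiv:2309.08199 — 6 statements merged into one kernel-verified Lean document; each statement's English description precedes it below -/
import Mathlib

section
/- (Theorem 1(b), identification via selection probability and outcome mean) Under Assumptions (A1)–(A4), the average treatment effect satisfies τ = E[(R/ρ(X))·(m(1,X,V) − m(0,X,V))]. -/
open MeasureTheory ProbabilityTheory
open scoped ENNReal

/-!
In each arm, the tower property through `σ(Z, X, V)` turns `E[Z Y | X, V]` into `π · m(1, X, V)`,
while ignorability (A2) factorises the same quantity as `E[Z Y1 | X, V] = π · E[Y1 | X, V]`;
positivity (A3) cancels `π`, and the control arm is the same argument for `1 - Z`. Hence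
`τ = E[m(1, X, V) - m(0, X, V)]`. By (A1), `R` is conditionally independent of `V` given `X`, so
`E[R | X, V] = ρ(X)` and the weight `R / ρ(X)` may be replaced by `E[R | X, V] / ρ(X) = 1`. The
weight is unbounded, but since `R ≥ 0`, `∫⁻ |g| R = ∫⁻ |g| E[R | X, V]` for `σ(X, V)`-measurable
`g`, which supplies the integrability.
-/

namespace MeasureTheory

variable {Ω : Type*} {m : MeasurableSpace Ω} [mΩ : MeasurableSpace Ω] {μ : Measure Ω}
  [IsFiniteMeasure μ] {f : Ω → ℝ}

lemma lintegral_ofReal_condExp_mul (hm : m ≤ mΩ) (hfi : Integrable f μ) (hf : 0 ≤ᵐ[μ] f)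
    {g : Ω → ℝ≥0∞} (hg : Measurable[m] g) :
    ∫⁻ ω, ENNReal.ofReal (μ[f | m] ω) * g ω ∂μ
      = ∫⁻ ω, ENNReal.ofReal (f ω) * g ω ∂μ := by
  have hdensity : (μ.withDensity fun ω ↦ ENNReal.ofReal (μ[f | m] ω)).trim hm
      = (μ.withDensity fun ω ↦ ENNReal.ofReal (f ω)).trim hm := by
    refine @Measure.ext _ m _ _ fun s hs ↦ ?_
    rw [trim_measurableSet_eq hm hs, trim_measurableSet_eq hm hs,
      withDensity_apply _ (hm s hs), withDensity_apply _ (hm s hs),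
      ← ofReal_integral_eq_lintegral_ofReal integrable_condExp.integrableOn
        (ae_restrict_of_ae (condExp_nonneg hf)),
      ← ofReal_integral_eq_lintegral_ofReal hfi.integrableOn (ae_restrict_of_ae hf),
      setIntegral_condExp hm hfi hs]
  have hgμ := (hg.mono hm le_rfl).aemeasurable (μ := μ)
  rw [← Pi.mul_def, ← Pi.mul_def,
    ← lintegral_withDensity_eq_lintegral_mul₀
      (stronglyMeasurable_condExp.mono hm).measurable.ennreal_ofReal.aemeasurable hgμ,
    ← lintegral_withDensity_eq_lintegral_mul₀ hfi.1.aemeasurable.ennreal_ofReal hgμ,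
    ← lintegral_trim hm hg, ← lintegral_trim hm hg, hdensity]

lemma integral_mul_eq_integral_mul_condExp (hm : m ≤ mΩ) (hfi : Integrable f μ)
    (hf : 0 ≤ᵐ[μ] f) {g : Ω → ℝ} (hg : StronglyMeasurable[m] g)
    (hgf : Integrable (g * μ[f | m]) μ) :
    ∫ ω, g ω * f ω ∂μ = ∫ ω, g ω * μ[f | m] ω ∂μ := by
  have henorm {h : Ω → ℝ} (hh : 0 ≤ᵐ[μ] h) :
      ∫⁻ ω, ‖(g * h) ω‖ₑ ∂μ = ∫⁻ ω, ENNReal.ofReal (h ω) * ‖g ω‖ₑ ∂μ := by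
    refine lintegral_congr_ae (hh.mono fun ω hω ↦ ?_)
    simp only [Pi.mul_apply]
    rw [enorm_mul, Real.enorm_of_nonneg hω, mul_comm]
  have hgfi : Integrable (g * f) μ := by
    refine ⟨(hg.mono hm).aestronglyMeasurable.mul hfi.1, ?_⟩
    have hfin := hgf.2
    rw [hasFiniteIntegral_iff_enorm] at hfin ⊢
    rwa [henorm hf, ← lintegral_ofReal_condExp_mul hm hfi hf (g := fun ω ↦ ‖g ω‖ₑ)
      (measurable_enorm.comp hg.measurable), ← henorm (condExp_nonneg hf)]
  rw [← integral_condExp hm]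
  exact integral_congr_ae (condExp_mul_of_stronglyMeasurable_left hg hgfi hfi)

lemma integral_div_mul_eq_of_condExp_ae_eq (hm : m ≤ mΩ) {R ρ φ : Ω → ℝ}
    (hRi : Integrable R μ) (hR : 0 ≤ᵐ[μ] R) (hρ : StronglyMeasurable[m] ρ)
    (hρ0 : ∀ᵐ ω ∂μ, 0 < ρ ω) (hER : μ[R | m] =ᵐ[μ] ρ) (hφ : StronglyMeasurable[m] φ)
    (hφi : Integrable φ μ) :
    ∫ ω, R ω / ρ ω * φ ω ∂μ = ∫ ω, φ ω ∂μ := by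
  have hcancel : (fun ω ↦ φ ω / ρ ω) * μ[R | m] =ᵐ[μ] φ := by
    filter_upwards [hER, hρ0] with ω h hρ
    rw [Pi.mul_apply, h, div_mul_cancel₀ _ hρ.ne']
  calc ∫ ω, R ω / ρ ω * φ ω ∂μ
    _ = ∫ ω, φ ω / ρ ω * R ω ∂μ := integral_congr_ae (ae_of_all _ fun ω ↦ by ring)
    _ = ∫ ω, φ ω / ρ ω * μ[R | m] ω ∂μ :=
      integral_mul_eq_integral_mul_condExp hm hRi hR (hφ.div hρ) (hφi.congr hcancel.symm)
    _ = ∫ ω, φ ω ∂μ := integral_congr_ae hcancel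

end MeasureTheory

namespace ProbabilityTheory

variable {Ω : Type*} {m m' : MeasurableSpace Ω} [mΩ : MeasurableSpace Ω]
  [StandardBorelSpace Ω] {μ : Measure Ω} [IsFiniteMeasure μ] {hm : m ≤ mΩ}

lemma CondIndepFun.ae_indepFun_condExpKernel {β β' : Type*} [MeasurableSpace β]
    [MeasurableSpace β'] [MeasurableSpace.CountableOrCountablyGenerated Ω (β × β')]
    {f : Ω → β} {g : Ω → β'} (hf : Measurable f) (hg : Measurable g)
    (h : CondIndepFun m hm f g μ) :
    ∀ᵐ ω ∂μ, IndepFun f g (condExpKernel μ m ω) := by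
  filter_upwards [ae_of_ae_trim hm ((condIndepFun_iff_map_prod_eq_prod_map_map hf hg).1 h)]
    with ω hω
  rw [indepFun_iff_map_prod_eq_prod_map_map hf.aemeasurable hg.aemeasurable]
  simpa [Kernel.map_apply _ (hf.prodMk hg), Kernel.prod_apply, Kernel.map_apply _ hf,
    Kernel.map_apply _ hg] using hω

lemma CondIndepFun.condExp_mul {f g : Ω → ℝ} (hf : Measurable f) (hg : Measurable g)
    (hfi : Integrable f μ) (hgi : Integrable g μ) (hfg : Integrable (f * g) μ)
    (h : CondIndepFun m hm f g μ) :
    μ[f * g | m] =ᵐ[μ] μ[f | m] * μ[g | m] := by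
  filter_upwards [condExp_ae_eq_integral_condExpKernel hm hfg,
    condExp_ae_eq_integral_condExpKernel hm hfi, condExp_ae_eq_integral_condExpKernel hm hgi,
    h.ae_indepFun_condExpKernel hf hg] with ω hfg hf' hg' hind
  rw [Pi.mul_apply, hfg, hf', hg']
  exact hind.integral_fun_mul_eq_mul_integral hf.aestronglyMeasurable hg.aestronglyMeasurable

lemma condExp_treated_ae_eq (hmm' : m ≤ m') (hm' : m' ≤ mΩ) {Z Y Y0 Y1 g : Ω → ℝ}
    (hZ : StronglyMeasurable[m'] Z) (hZ01 : ∀ ω, Z ω = 0 ∨ Z ω = 1)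
    (hY : ∀ ω, Y ω = Z ω * Y1 ω + (1 - Z ω) * Y0 ω) (hYi : Integrable Y μ)
    (hY1 : Measurable Y1) (hY1i : Integrable Y1 μ) (hg : StronglyMeasurable[m] g)
    (hgi : Integrable g μ) (hYg : ∀ᵐ ω ∂μ, Z ω = 1 → μ[Y | m'] ω = g ω)
    (hind : CondIndepFun m hm Z Y1 μ) (hZ0 : ∀ᵐ ω ∂μ, μ[Z | m] ω ≠ 0) :
    μ[Y1 | m] =ᵐ[μ] g := by
  have hZm := (hZ.mono hm').aestronglyMeasurable (μ := μ)
  have hZbd : ∀ᵐ ω ∂μ, ‖Z ω‖ ≤ 1 :=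
    ae_of_all _ fun ω ↦ by rcases hZ01 ω with h | h <;> simp [h]
  have hZi : Integrable Z μ := .of_bound hZm 1 hZbd
  have hZY : Z * Y = Z * Y1 := funext fun ω ↦ by
    rcases hZ01 ω with h | h <;> simp [hY, h]
  have hZg : Z * μ[Y | m'] =ᵐ[μ] Z * g := hYg.mono fun ω hω ↦ by
    rcases hZ01 ω with h | h <;> simp [h, hω]
  have key : μ[Z | m] * μ[Y1 | m] =ᵐ[μ] μ[Z | m] * g := calc
    μ[Z | m] * μ[Y1 | m]
    _ =ᵐ[μ] μ[Z * Y1 | m] :=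
      (hind.condExp_mul (hZ.mono hm').measurable hY1 hZi hY1i (hY1i.bdd_mul hZm hZbd)).symm
    _ = μ[Z * Y | m] := by rw [hZY]
    _ =ᵐ[μ] μ[μ[Z * Y | m'] | m] := (condExp_condExp_of_le hmm' hm').symm
    _ =ᵐ[μ] μ[g * Z | m] := condExp_congr_ae <|
      (condExp_stronglyMeasurable_mul_of_bound hm' hZ hYi 1 hZbd).trans
        (hZg.trans (.of_eq (mul_comm Z g)))
    _ =ᵐ[μ] g * μ[Z | m] :=
      condExp_mul_of_stronglyMeasurable_left hg (hgi.mul_bdd hZm hZbd) hZi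
    _ = μ[Z | m] * g := mul_comm _ _
  filter_upwards [key, hZ0] with ω h h0
  exact mul_left_cancel₀ h0 h

lemma condExp_control_ae_eq (hmm' : m ≤ m') (hm' : m' ≤ mΩ) {Z Y Y0 Y1 g : Ω → ℝ}
    (hZ : StronglyMeasurable[m'] Z) (hZ01 : ∀ ω, Z ω = 0 ∨ Z ω = 1)
    (hY : ∀ ω, Y ω = Z ω * Y1 ω + (1 - Z ω) * Y0 ω) (hYi : Integrable Y μ)
    (hY0 : Measurable Y0) (hY0i : Integrable Y0 μ) (hg : StronglyMeasurable[m] g)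
    (hgi : Integrable g μ) (hYg : ∀ᵐ ω ∂μ, Z ω = 0 → μ[Y | m'] ω = g ω)
    (hind : CondIndepFun m hm Z Y0 μ) (hZ1 : ∀ᵐ ω ∂μ, μ[Z | m] ω ≠ 1) :
    μ[Y0 | m] =ᵐ[μ] g := by
  have hZi : Integrable Z μ := .of_bound (hZ.mono hm').aestronglyMeasurable 1
    (ae_of_all _ fun ω ↦ by rcases hZ01 ω with h | h <;> simp [h])
  refine condExp_treated_ae_eq hmm' hm' (Z := 1 - Z) (Y0 := Y1) (stronglyMeasurable_one.sub hZ)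
    (fun ω ↦ ?_) (fun ω ↦ ?_) hYi hY0 hY0i hg hgi ?_
    (hind.comp (measurable_const.sub measurable_id) measurable_id) ?_
  · rcases hZ01 ω with h | h <;> simp [h]
  · simp only [Pi.sub_apply, Pi.one_apply, hY]
    ring
  · filter_upwards [hYg] with ω hω h1
    exact hω (by simpa using h1)
  · filter_upwards [hZ1, condExp_sub (integrable_const 1) hZi m] with ω hZω hsub
    rw [show (1 : Ω → ℝ) - Z = (fun _ ↦ 1) - Z from rfl, hsub, Pi.sub_apply,
      condExp_const (hmm'.trans hm')]
    exact sub_ne_zero.2 hZω.symm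

lemma integral_sub_eq_integral_sub_of_condIndepFun (hmm' : m ≤ m') (hm' : m' ≤ mΩ)
    {Z Y Y0 Y1 π : Ω → ℝ} {G : ℝ → Ω → ℝ} (hZ : StronglyMeasurable[m'] Z)
    (hZ01 : ∀ ω, Z ω = 0 ∨ Z ω = 1) (hY : ∀ ω, Y ω = Z ω * Y1 ω + (1 - Z ω) * Y0 ω)
    (hY0 : Measurable Y0) (hY0i : Integrable Y0 μ) (hY1 : Measurable Y1)
    (hY1i : Integrable Y1 μ) (hπ : π =ᵐ[μ] μ[Z | m])
    (hind : CondIndepFun m hm Z (fun ω ↦ (Y0 ω, Y1 ω)) μ) (hπ01 : ∀ᵐ ω ∂μ, 0 < π ω ∧ π ω < 1)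
    (hG : ∀ b, StronglyMeasurable[m] (G b)) (hGi : ∀ b, Integrable (G b) μ)
    (hYG : (fun ω ↦ G (Z ω) ω) =ᵐ[μ] μ[Y | m']) :
    ∫ ω, (Y1 ω - Y0 ω) ∂μ = ∫ ω, (G 1 ω - G 0 ω) ∂μ := by
  have hZm := (hZ.mono hm').aestronglyMeasurable (μ := μ)
  have hZbd : ∀ᵐ ω ∂μ, ‖Z ω‖ ≤ 1 ∧ ‖1 - Z ω‖ ≤ 1 :=
    ae_of_all _ fun ω ↦ by rcases hZ01 ω with h | h <;> simp [h]
  have hYi : Integrable Y μ :=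
    ((hY1i.bdd_mul hZm (hZbd.mono fun _ h ↦ h.1)).add
      (hY0i.bdd_mul (aestronglyMeasurable_const.sub hZm) (hZbd.mono fun _ h ↦ h.2))).congr
      (ae_of_all _ fun ω ↦ (hY ω).symm)
  have hπ' : ∀ᵐ ω ∂μ, μ[Z | m] ω ≠ 0 ∧ μ[Z | m] ω ≠ 1 := by
    filter_upwards [hπ, hπ01] with ω hω h01
    exact hω ▸ ⟨h01.1.ne', h01.2.ne⟩
  have hE1 : μ[Y1 | m] =ᵐ[μ] G 1 :=
    condExp_treated_ae_eq hmm' hm' hZ hZ01 hY hYi hY1 hY1i (hG 1) (hGi 1)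
      (hYG.mono fun ω h h1 ↦ h1 ▸ h.symm) (hind.comp measurable_id measurable_snd)
      (hπ'.mono fun _ h ↦ h.1)
  have hE0 : μ[Y0 | m] =ᵐ[μ] G 0 :=
    condExp_control_ae_eq hmm' hm' hZ hZ01 hY hYi hY0 hY0i (hG 0) (hGi 0)
      (hYG.mono fun ω h h0 ↦ h0 ▸ h.symm) (hind.comp measurable_id measurable_fst)
      (hπ'.mono fun _ h ↦ h.2)
  rw [integral_sub hY1i hY0i, integral_sub (hGi 1) (hGi 0),
    ← integral_condExp (hmm'.trans hm') (f := Y1), ← integral_condExp (hmm'.trans hm') (f := Y0),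
    integral_congr_ae hE1, integral_congr_ae hE0]

lemma condExp_comap_prodMk_ae_eq_of_condIndepFun {α β : Type*} [MeasurableSpace α]
    [MeasurableSpace β] [StandardBorelSpace β] [Nonempty β] {X : Ω → α} {V : Ω → β}
    {f : Ω → ℝ} (hX : Measurable X) (hV : Measurable V) (hf : Measurable f)
    (hfi : Integrable f μ) (h : V ⟂ᵢ[X, hX; μ] f) :
    μ[f | MeasurableSpace.comap (fun ω ↦ (X ω, V ω)) inferInstance]
      =ᵐ[μ] μ[f | MeasurableSpace.comap X inferInstance] := by
  have hXV : Measurable fun ω ↦ (X ω, V ω) := hX.prodMk hV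
  have hdist := (condIndepFun_iff_condDistrib_prod_ae_eq_prodMkRight hf hV hX).1 h
  filter_upwards [condExp_ae_eq_integral_condDistrib' hXV hfi,
    condExp_ae_eq_integral_condDistrib' hX hfi, ae_of_ae_map hXV.aemeasurable hdist]
    with ω hXVω hXω hω
  rw [hXVω, hXω, hω, Kernel.prodMkRight_apply]

end ProbabilityTheory

theorem identification_sel_prob_outcome_mean_general
    {Ω 𝒳 𝒱 : Type*}
    [MeasurableSpace Ω] [StandardBorelSpace Ω]
    [MeasurableSpace 𝒳]
    [MeasurableSpace 𝒱] [StandardBorelSpace 𝒱]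
    (μ : Measure Ω) [IsProbabilityMeasure μ]
    (X : Ω → 𝒳) (V : Ω → 𝒱) (Z R Y0 Y1 : Ω → ℝ)
    (hX : Measurable X) (hV : Measurable V) (hZ : Measurable Z)
    (hR : Measurable R) (hY0 : Measurable Y0) (hY1 : Measurable Y1)
    (hZ01 : ∀ ω, Z ω = 0 ∨ Z ω = 1) (hR01 : ∀ ω, R ω = 0 ∨ R ω = 1)
    (hYbd : ∃ C, ∀ ω, |Y0 ω| ≤ C ∧ |Y1 ω| ≤ C)
    (Y : Ω → ℝ) (hYdef : ∀ ω, Y ω = Z ω * Y1 ω + (1 - Z ω) * Y0 ω)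
    (pi : 𝒳 × 𝒱 → ℝ) (rho : 𝒳 → ℝ)
    (hrhoM : Measurable rho)
    (hpi : (fun ω => pi (X ω, V ω)) =ᵐ[μ]
      μ[Z | MeasurableSpace.comap (fun ω => (X ω, V ω)) inferInstance])
    (hrho : (fun ω => rho (X ω)) =ᵐ[μ]
      μ[R | MeasurableSpace.comap X inferInstance])
    (hA1 : CondIndepFun (MeasurableSpace.comap X inferInstance)
      (measurable_iff_comap_le.mp hX) R (fun ω => (Y ω, Z ω, V ω)) μ)
    (hA2 : CondIndepFun (MeasurableSpace.comap (fun ω => (X ω, V ω)) inferInstance)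
      (measurable_iff_comap_le.mp (hX.prodMk hV)) Z (fun ω => (Y0 ω, Y1 ω)) μ)
    (hA3 : ∀ᵐ ω ∂μ, 0 < pi (X ω, V ω) ∧ pi (X ω, V ω) < 1)
    (hA4 : ∀ᵐ ω ∂μ, 0 < rho (X ω))
    (mo : ℝ × 𝒳 × 𝒱 → ℝ) (hmoM : Measurable mo) (hmoBd : ∃ C, ∀ p, |mo p| ≤ C)
    (hmo : (fun ω => mo (Z ω, X ω, V ω)) =ᵐ[μ]
      μ[Y | MeasurableSpace.comap (fun ω => (Z ω, X ω, V ω)) inferInstance])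
 :
    ∫ ω, (Y1 ω - Y0 ω) ∂μ
      = ∫ ω, (R ω / rho (X ω)) * (mo (1, X ω, V ω) - mo (0, X ω, V ω)) ∂μ := by
  obtain ⟨C, hC⟩ := hYbd
  obtain ⟨D, hD⟩ := hmoBd
  have : Nonempty 𝒱 := (nonempty_of_isProbabilityMeasure μ).map V
  have hXV : Measurable fun ω ↦ (X ω, V ω) := hX.prodMk hV
  have hle : MeasurableSpace.comap (fun ω ↦ (X ω, V ω)) inferInstance
      ≤ MeasurableSpace.comap (fun ω ↦ (Z ω, X ω, V ω)) inferInstance :=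
    Measurable.comap_le (f := fun ω ↦ (X ω, V ω)) (measurable_snd.comp (comap_measurable _))
  have hmo_sm (b : ℝ) :
      StronglyMeasurable[MeasurableSpace.comap (fun ω ↦ (X ω, V ω)) inferInstance]
        (fun ω ↦ mo (b, X ω, V ω)) :=
    ((hmoM.comp measurable_prodMk_left).comp (comap_measurable _)).stronglyMeasurable
  have hmo_int (b : ℝ) : Integrable (fun ω ↦ mo (b, X ω, V ω)) μ :=
    .of_bound ((hmo_sm b).mono hXV.comap_le).aestronglyMeasurable D (ae_of_all _ fun _ ↦ hD _)
  have hR0 : 0 ≤ᵐ[μ] R := ae_of_all _ fun ω ↦ by rcases hR01 ω with h | h <;> simp [h]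
  have hRi : Integrable R μ := .of_bound hR.aestronglyMeasurable 1
    (ae_of_all _ fun ω ↦ by rcases hR01 ω with h | h <;> simp [h])
  have hER : μ[R | MeasurableSpace.comap (fun ω ↦ (X ω, V ω)) inferInstance]
      =ᵐ[μ] fun ω ↦ rho (X ω) :=
    (condExp_comap_prodMk_ae_eq_of_condIndepFun hX hV hR hRi
      (hA1.symm.comp (measurable_snd.comp measurable_snd) measurable_id)).trans hrho.symm
  calc ∫ ω, (Y1 ω - Y0 ω) ∂μ
      = ∫ ω, (mo (1, X ω, V ω) - mo (0, X ω, V ω)) ∂μ :=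
        integral_sub_eq_integral_sub_of_condIndepFun hle (hZ.prodMk hXV).comap_le
          (G := fun b ω ↦ mo (b, X ω, V ω))
          (measurable_fst.comp (comap_measurable _)).stronglyMeasurable hZ01 hYdef
          hY0 (.of_bound hY0.aestronglyMeasurable C (ae_of_all _ fun ω ↦ (hC ω).1))
          hY1 (.of_bound hY1.aestronglyMeasurable C (ae_of_all _ fun ω ↦ (hC ω).2))
          hpi hA2 hA3 hmo_sm hmo_int hmo
    _ = _ := (integral_div_mul_eq_of_condExp_ae_eq hXV.comap_le hRi hR0
          ((hrhoM.comp measurable_fst).comp (comap_measurable _)).stronglyMeasurable hA4 hER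
          ((hmo_sm 1).sub (hmo_sm 0)) ((hmo_int 1).sub (hmo_int 0))).symm

theorem identification_sel_prob_outcome_mean
    {Ω 𝒳 𝒱 : Type*}
    [MeasurableSpace Ω] [StandardBorelSpace Ω] [Nonempty Ω]
    [MeasurableSpace 𝒳] [StandardBorelSpace 𝒳]
    [MeasurableSpace 𝒱] [StandardBorelSpace 𝒱]
    (μ : Measure Ω) [IsProbabilityMeasure μ]
    (X : Ω → 𝒳) (V : Ω → 𝒱) (Z R Y0 Y1 : Ω → ℝ)
    (hX : Measurable X) (hV : Measurable V) (hZ : Measurable Z)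
    (hR : Measurable R) (hY0 : Measurable Y0) (hY1 : Measurable Y1)
    (hZ01 : ∀ ω, Z ω = 0 ∨ Z ω = 1) (hR01 : ∀ ω, R ω = 0 ∨ R ω = 1)
    (hYbd : ∃ C, ∀ ω, |Y0 ω| ≤ C ∧ |Y1 ω| ≤ C)
    (Y : Ω → ℝ) (hYdef : ∀ ω, Y ω = Z ω * Y1 ω + (1 - Z ω) * Y0 ω)
    (pi : 𝒳 × 𝒱 → ℝ) (rho : 𝒳 → ℝ)
    (hpiM : Measurable pi) (hrhoM : Measurable rho)
    (hpi : (fun ω => pi (X ω, V ω)) =ᵐ[μ]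
      μ[Z | MeasurableSpace.comap (fun ω => (X ω, V ω)) inferInstance])
    (hrho : (fun ω => rho (X ω)) =ᵐ[μ]
      μ[R | MeasurableSpace.comap X inferInstance])
    (hA1 : CondIndepFun (MeasurableSpace.comap X inferInstance)
      (measurable_iff_comap_le.mp hX) R (fun ω => (Y ω, Z ω, V ω)) μ)
    (hA2 : CondIndepFun (MeasurableSpace.comap (fun ω => (X ω, V ω)) inferInstance)
      (measurable_iff_comap_le.mp (hX.prodMk hV)) Z (fun ω => (Y0 ω, Y1 ω)) μ)
    (hA3 : ∀ᵐ ω ∂μ, 0 < pi (X ω, V ω) ∧ pi (X ω, V ω) < 1)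
    (hA4 : ∀ᵐ ω ∂μ, 0 < rho (X ω))
    (mo : ℝ × 𝒳 × 𝒱 → ℝ) (hmoM : Measurable mo) (hmoBd : ∃ C, ∀ p, |mo p| ≤ C)
    (hmo : (fun ω => mo (Z ω, X ω, V ω)) =ᵐ[μ]
      μ[Y | MeasurableSpace.comap (fun ω => (Z ω, X ω, V ω)) inferInstance])
 :
    ∫ ω, (Y1 ω - Y0 ω) ∂μ
      = ∫ ω, (R ω / rho (X ω)) * (mo (1, X ω, V ω) - mo (0, X ω, V ω)) ∂μ :=
  identification_sel_prob_outcome_mean_general μ X V Z R Y0 Y1 hX hV hZ hR hY0 hY1 hZ01 hR01 hYbd Y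
    hYdef pi rho hrhoM hpi hrho hA1 hA2 hA3 hA4 mo hmoM hmoBd hmo
end

section
/- (Theorem 1(c), identification via imputation model and outcome mean) Under Assumptions (A1)–(A4), the average treatment effect satisfies τ = E[δ(1,X) − δ(0,X)]. -/
/-!
For each arm `z`, with `ξ` the indicator of `{Z = z}` and `W = σ(X, V)`, compute `E[ξ Y | W]`
twice. Conditioning first on `σ(Z, X, V) ⊇ W` and using the outcome mean, `ξ Y` has conditional
mean `ξ m(z, X, V)`, so `E[ξ Y | W] = m(z, X, V) E[ξ | W]`. On the other hand `ξ Y = ξ Y_z`, and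
no unmeasured confounding makes `ξ` and `Y_z` conditionally independent given `W`, so
`E[ξ Y | W] = E[ξ | W] E[Y_z | W]`. Overlap makes `E[ξ | W]` nonzero, hence
`m(z, X, V) = E[Y_z | W]`, and taking expectations (twice by the tower property)
`E[δ(z, X)] = E[m(z, X, V)] = E[Y_z]`.
-/

open MeasureTheory ProbabilityTheory

section

variable {Ω : Type*} {m G mΩ : MeasurableSpace Ω} {μ : Measure Ω}

theorem ProbabilityTheory.CondIndepFun.condExp_mul_ae_eq [StandardBorelSpace Ω] [IsFiniteMeasure μ]
    {hm : m ≤ mΩ} {f g : Ω → ℝ} (hfg : CondIndepFun m hm f g μ)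
    (hf : Measurable f) (hg : Measurable g)
    (hf_int : Integrable f μ) (hg_int : Integrable g μ) (hfg_int : Integrable (f * g) μ) :
    μ[f * g | m] =ᵐ[μ] μ[f | m] * μ[g | m] := by
  have h_indep : ∀ᵐ ω ∂μ, f ⟂ᵢ[condExpKernel μ m ω] g := by
    refine ae_of_ae_trim hm ?_
    filter_upwards [(condIndepFun_iff_map_prod_eq_prod_map_map hf hg).mp hfg] with ω hω
    rw [indepFun_iff_map_prod_eq_prod_map_map hf.aemeasurable hg.aemeasurable]
    rw [Kernel.map_apply _ (hf.prodMk hg)] at hω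
    simpa [Kernel.prod_apply, Kernel.map_apply _ hf, Kernel.map_apply _ hg] using hω
  filter_upwards [condExp_ae_eq_integral_condExpKernel hm hfg_int,
    condExp_ae_eq_integral_condExpKernel hm hf_int,
    condExp_ae_eq_integral_condExpKernel hm hg_int, h_indep] with ω hfgω hfω hgω hω
  rw [Pi.mul_apply, hfgω, hfω, hgω]
  exact hω.integral_mul_eq_mul_integral hf.aestronglyMeasurable hg.aestronglyMeasurable

theorem integral_eq_of_ae_eq_condExp (hm : m ≤ mΩ) [SigmaFinite (μ.trim hm)] {f g : Ω → ℝ}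
    (h : f =ᵐ[μ] μ[g | m]) : ∫ ω, f ω ∂μ = ∫ ω, g ω ∂μ :=
  (integral_congr_ae h).trans (integral_condExp hm)

theorem ae_eq_condExp_of_condIndepFun_of_mul_eq [StandardBorelSpace Ω] [IsFiniteMeasure μ]
    (hmG : m ≤ G) (hG : G ≤ mΩ) {ξ Y Yz g h : Ω → ℝ} {c : ℝ}
    (hξ : StronglyMeasurable[G] ξ) (hξ_bdd : ∀ ω, ‖ξ ω‖ ≤ c)
    (hY_int : Integrable Y μ) (hYz : Measurable Yz) (hYz_int : Integrable Yz μ)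
    (hY_eq : ξ * Y = ξ * Yz) (hg : g =ᵐ[μ] μ[Y | G]) (hgh : ξ * g = ξ * h)
    (hh : StronglyMeasurable[m] h)
    (hind : CondIndepFun m (hmG.trans hG) ξ Yz μ) (hpos : ∀ᵐ ω ∂μ, μ[ξ | m] ω ≠ 0) :
    h =ᵐ[μ] μ[Yz | m] := by
  have hξ_meas : Measurable ξ := (hξ.mono hG).measurable
  have hξ_bdd' : ∀ᵐ ω ∂μ, ‖ξ ω‖ ≤ c := .of_forall hξ_bdd
  have hξ_int : Integrable ξ μ := .of_bound hξ_meas.aestronglyMeasurable c hξ_bdd'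
  have hξY_int : Integrable (ξ * Y) μ := hY_int.bdd_mul hξ_meas.aestronglyMeasurable hξ_bdd'
  have hξh_int : Integrable (ξ * h) μ := by
    rw [← hgh]
    exact (integrable_condExp.congr hg.symm).bdd_mul hξ_meas.aestronglyMeasurable hξ_bdd'
  have h_fine : μ[ξ * Y | G] =ᵐ[μ] ξ * h :=
    (condExp_mul_of_stronglyMeasurable_left hξ hξY_int hY_int).trans
      (hgh ▸ Filter.EventuallyEq.rfl.mul hg.symm)
  have h_pullout : μ[ξ * Y | m] =ᵐ[μ] μ[ξ | m] * h :=
    (condExp_condExp_of_le hmG hG).symm.trans <| (condExp_congr_ae h_fine).trans <|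
      condExp_mul_of_stronglyMeasurable_right hh hξh_int hξ_int
  have h_indep : μ[ξ * Y | m] =ᵐ[μ] μ[ξ | m] * μ[Yz | m] := by
    rw [hY_eq]
    exact hind.condExp_mul_ae_eq hξ_meas hYz hξ_int hYz_int (hY_eq ▸ hξY_int)
  filter_upwards [h_pullout, h_indep, hpos] with ω h₁ h₂ hω
  exact mul_left_cancel₀ hω (h₁.symm.trans h₂)

theorem condExp_indicator_preimage_ne_zero [IsFiniteMeasure μ] (hm : m ≤ mΩ) {Z : Ω → ℝ}
    (hZ : Measurable Z) (hZ01 : ∀ ω, Z ω = 0 ∨ Z ω = 1)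
    (hoverlap : ∀ᵐ ω ∂μ, μ[Z | m] ω ∈ Set.Ioo 0 1) {z : ℝ} (hz : z = 0 ∨ z = 1) :
    ∀ᵐ ω ∂μ, (μ⟦Z ⁻¹' {z} | m⟧) ω ≠ 0 := by
  have hZ_int : Integrable Z μ :=
    .of_bound hZ.aestronglyMeasurable 1
      (.of_forall fun ω => by rcases hZ01 ω with h | h <;> simp [h])
  rcases hz with rfl | rfl
  · have h_eq : (Z ⁻¹' {0}).indicator (fun _ => (1 : ℝ)) = (fun _ => 1) - Z := by
      funext ω; rcases hZ01 ω with h | h <;> simp [h]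
    filter_upwards [condExp_sub (integrable_const (1 : ℝ)) hZ_int m, hoverlap] with ω hω hZω
    rw [h_eq, hω, condExp_const hm, Pi.sub_apply]
    exact sub_ne_zero.mpr hZω.2.ne'
  · have h_eq : (Z ⁻¹' {1}).indicator (fun _ => (1 : ℝ)) = Z := by
      funext ω; rcases hZ01 ω with h | h <;> simp [h]
    filter_upwards [hoverlap] with ω hZω
    rw [h_eq]
    exact hZω.1.ne'

end

section

variable {Ω 𝒳 𝒱 : Type*} [mΩ : MeasurableSpace Ω] [StandardBorelSpace Ω]
  [MeasurableSpace 𝒳] [MeasurableSpace 𝒱] {μ : Measure Ω} [IsProbabilityMeasure μ]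

theorem integral_outcomeMean_eq_integral_potentialOutcome {X : Ω → 𝒳} {V : Ω → 𝒱}
    {Z Y Yz : Ω → ℝ} (hXV : Measurable fun ω => (X ω, V ω)) (hZ : Measurable Z)
    (hZ01 : ∀ ω, Z ω = 0 ∨ Z ω = 1) (hY_int : Integrable Y μ) (hYz : Measurable Yz)
    (hYz_int : Integrable Yz μ) {z : ℝ} (hz : z = 0 ∨ z = 1)
    (hY_eq : ∀ ω, Z ω = z → Y ω = Yz ω)
    (hind : CondIndepFun (.comap (fun ω => (X ω, V ω)) inferInstance) hXV.comap_le Z Yz μ)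
    (hoverlap : ∀ᵐ ω ∂μ, μ[Z | .comap (fun ω => (X ω, V ω)) inferInstance] ω ∈ Set.Ioo 0 1)
    {mo : ℝ × 𝒳 × 𝒱 → ℝ} (hmo_meas : Measurable mo)
    (hmo : (fun ω => mo (Z ω, X ω, V ω)) =ᵐ[μ]
      μ[Y | .comap (fun ω => (Z ω, X ω, V ω)) inferInstance])
    {δ : 𝒳 → ℝ}
    (hδ : (fun ω => δ (X ω)) =ᵐ[μ] μ[fun ω => mo (z, X ω, V ω) | .comap X inferInstance]) :
    ∫ ω, δ (X ω) ∂μ = ∫ ω, Yz ω ∂μ := by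
  set W : MeasurableSpace Ω := .comap (fun ω => (X ω, V ω)) inferInstance
  set G : MeasurableSpace Ω := .comap (fun ω => (Z ω, X ω, V ω)) inferInstance
  have hXV_W : Measurable[W] fun ω => (X ω, V ω) := comap_measurable _
  have hZXV_G : Measurable[G] fun ω => (Z ω, X ω, V ω) := comap_measurable _
  have hXW : .comap X inferInstance ≤ W := (measurable_fst.comp hXV_W).comap_le
  have hWG : W ≤ G := (measurable_snd.comp hZXV_G).comap_le
  have hG : G ≤ mΩ := (hZ.prodMk hXV).comap_le
  set ξ : Ω → ℝ := (Z ⁻¹' {z}).indicator fun _ => 1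
  have h_ind : Measurable (({z} : Set ℝ).indicator fun _ => (1 : ℝ)) :=
    measurable_const.indicator (measurableSet_singleton z)
  have hξ : StronglyMeasurable[G] ξ := (h_ind.comp (measurable_fst.comp hZXV_G)).stronglyMeasurable
  have hξ_bdd (ω : Ω) : ‖ξ ω‖ ≤ 1 :=
    (norm_indicator_le_norm_self _ ω).trans_eq norm_one
  have h_arm {f g : Ω → ℝ} (hfg : ∀ ω, Z ω = z → f ω = g ω) : ξ * f = ξ * g := by
    funext ω
    by_cases h : Z ω = z <;> simp [ξ, h, hfg]
  have hmoz : (fun ω => mo (z, X ω, V ω)) =ᵐ[μ] μ[Yz | W] :=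
    ae_eq_condExp_of_condIndepFun_of_mul_eq hWG hG hξ hξ_bdd hY_int hYz hYz_int
      (h_arm hY_eq) hmo (h_arm fun ω h => by simp only [h])
      (hmo_meas.comp (measurable_const.prodMk hXV_W)).stronglyMeasurable
      (hind.comp h_ind measurable_id)
      (condExp_indicator_preimage_ne_zero (hWG.trans hG) hZ hZ01 hoverlap hz)
  calc ∫ ω, δ (X ω) ∂μ = ∫ ω, mo (z, X ω, V ω) ∂μ :=
        integral_eq_of_ae_eq_condExp (hXW.trans (hWG.trans hG)) hδ
    _ = ∫ ω, Yz ω ∂μ := integral_eq_of_ae_eq_condExp (hWG.trans hG) hmoz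

end

theorem identification_imputation_outcome_mean_general
    {Ω 𝒳 𝒱 : Type*}
    [MeasurableSpace Ω] [StandardBorelSpace Ω]
    [MeasurableSpace 𝒳]
    [MeasurableSpace 𝒱]
    (μ : Measure Ω) [IsProbabilityMeasure μ]
    (X : Ω → 𝒳) (V : Ω → 𝒱) (Z Y0 Y1 : Ω → ℝ)
    (hX : Measurable X) (hV : Measurable V) (hZ : Measurable Z)
    (hY0 : Measurable Y0) (hY1 : Measurable Y1)
    (hZ01 : ∀ ω, Z ω = 0 ∨ Z ω = 1)
    (hYbd : ∃ C, ∀ ω, |Y0 ω| ≤ C ∧ |Y1 ω| ≤ C)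
    (Y : Ω → ℝ) (hYdef : ∀ ω, Y ω = Z ω * Y1 ω + (1 - Z ω) * Y0 ω)
    (pi : 𝒳 × 𝒱 → ℝ)
    (hpi : (fun ω => pi (X ω, V ω)) =ᵐ[μ]
      μ[Z | MeasurableSpace.comap (fun ω => (X ω, V ω)) inferInstance])
    (hA2 : CondIndepFun (MeasurableSpace.comap (fun ω => (X ω, V ω)) inferInstance)
      (measurable_iff_comap_le.mp (hX.prodMk hV)) Z (fun ω => (Y0 ω, Y1 ω)) μ)
    (hA3 : ∀ᵐ ω ∂μ, 0 < pi (X ω, V ω) ∧ pi (X ω, V ω) < 1)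
    (mo : ℝ × 𝒳 × 𝒱 → ℝ) (hmoM : Measurable mo)
    (hmo : (fun ω => mo (Z ω, X ω, V ω)) =ᵐ[μ]
      μ[Y | MeasurableSpace.comap (fun ω => (Z ω, X ω, V ω)) inferInstance])
    (del : ℝ → 𝒳 → ℝ)
    (hdel : ∀ z ∈ ({0, 1} : Set ℝ),
      (fun ω => del z (X ω)) =ᵐ[μ]
        μ[(fun ω => mo (z, X ω, V ω)) | MeasurableSpace.comap X inferInstance])
 :
    ∫ ω, (Y1 ω - Y0 ω) ∂μ = ∫ ω, (del 1 (X ω) - del 0 (X ω)) ∂μ := by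
  obtain ⟨C, hC⟩ := hYbd
  have hY0_int : Integrable Y0 μ := .of_bound hY0.aestronglyMeasurable C (.of_forall (hC · |>.1))
  have hY1_int : Integrable Y1 μ := .of_bound hY1.aestronglyMeasurable C (.of_forall (hC · |>.2))
  have hY_int : Integrable Y μ := by
    refine .of_bound ?_ C (.of_forall fun ω => ?_)
    · rw [funext hYdef]
      exact ((hZ.mul hY1).add ((measurable_const.sub hZ).mul hY0)).aestronglyMeasurable
    · rcases hZ01 ω with h | h <;> simp [hYdef, h, hC]
  have hoverlap : ∀ᵐ ω ∂μ, μ[Z | .comap (fun ω => (X ω, V ω)) inferInstance] ω ∈ Set.Ioo 0 1 := by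
    filter_upwards [hpi, hA3] with ω hω hπ
    exact hω ▸ hπ
  have hdel_int (z : ℝ) (hz : z ∈ ({0, 1} : Set ℝ)) : Integrable (fun ω => del z (X ω)) μ :=
    integrable_condExp.congr (hdel z hz).symm
  have h_treated : ∫ ω, del 1 (X ω) ∂μ = ∫ ω, Y1 ω ∂μ :=
    integral_outcomeMean_eq_integral_potentialOutcome (hX.prodMk hV) hZ hZ01 hY_int hY1 hY1_int
      (.inr rfl) (fun ω h => by simp [hYdef, h]) (hA2.comp measurable_id measurable_snd)
      hoverlap hmoM hmo (hdel 1 (by simp))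
  have h_control : ∫ ω, del 0 (X ω) ∂μ = ∫ ω, Y0 ω ∂μ :=
    integral_outcomeMean_eq_integral_potentialOutcome (hX.prodMk hV) hZ hZ01 hY_int hY0 hY0_int
      (.inl rfl) (fun ω h => by simp [hYdef, h]) (hA2.comp measurable_id measurable_fst)
      hoverlap hmoM hmo (hdel 0 (by simp))
  rw [integral_sub hY1_int hY0_int, integral_sub (hdel_int 1 (by simp)) (hdel_int 0 (by simp)),
    h_treated, h_control]

theorem identification_imputation_outcome_mean
    {Ω 𝒳 𝒱 : Type*}
    [MeasurableSpace Ω] [StandardBorelSpace Ω] [Nonempty Ω]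
    [MeasurableSpace 𝒳] [StandardBorelSpace 𝒳]
    [MeasurableSpace 𝒱] [StandardBorelSpace 𝒱]
    (μ : Measure Ω) [IsProbabilityMeasure μ]
    (X : Ω → 𝒳) (V : Ω → 𝒱) (Z R Y0 Y1 : Ω → ℝ)
    (hX : Measurable X) (hV : Measurable V) (hZ : Measurable Z)
    (hR : Measurable R) (hY0 : Measurable Y0) (hY1 : Measurable Y1)
    (hZ01 : ∀ ω, Z ω = 0 ∨ Z ω = 1) (hR01 : ∀ ω, R ω = 0 ∨ R ω = 1)
    (hYbd : ∃ C, ∀ ω, |Y0 ω| ≤ C ∧ |Y1 ω| ≤ C)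
    (Y : Ω → ℝ) (hYdef : ∀ ω, Y ω = Z ω * Y1 ω + (1 - Z ω) * Y0 ω)
    (pi : 𝒳 × 𝒱 → ℝ) (rho : 𝒳 → ℝ)
    (hpiM : Measurable pi) (hrhoM : Measurable rho)
    (hpi : (fun ω => pi (X ω, V ω)) =ᵐ[μ]
      μ[Z | MeasurableSpace.comap (fun ω => (X ω, V ω)) inferInstance])
    (hrho : (fun ω => rho (X ω)) =ᵐ[μ]
      μ[R | MeasurableSpace.comap X inferInstance])
    (hA1 : CondIndepFun (MeasurableSpace.comap X inferInstance)
      (measurable_iff_comap_le.mp hX) R (fun ω => (Y ω, Z ω, V ω)) μ)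
    (hA2 : CondIndepFun (MeasurableSpace.comap (fun ω => (X ω, V ω)) inferInstance)
      (measurable_iff_comap_le.mp (hX.prodMk hV)) Z (fun ω => (Y0 ω, Y1 ω)) μ)
    (hA3 : ∀ᵐ ω ∂μ, 0 < pi (X ω, V ω) ∧ pi (X ω, V ω) < 1)
    (hA4 : ∀ᵐ ω ∂μ, 0 < rho (X ω))
    (mo : ℝ × 𝒳 × 𝒱 → ℝ) (hmoM : Measurable mo) (hmoBd : ∃ C, ∀ p, |mo p| ≤ C)
    (hmo : (fun ω => mo (Z ω, X ω, V ω)) =ᵐ[μ]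
      μ[Y | MeasurableSpace.comap (fun ω => (Z ω, X ω, V ω)) inferInstance])
    (del : ℝ → 𝒳 → ℝ) (hdelM : ∀ z, Measurable (del z))
    (hdel : ∀ z ∈ ({0, 1} : Set ℝ),
      (fun ω => del z (X ω)) =ᵐ[μ]
        μ[(fun ω => mo (z, X ω, V ω)) | MeasurableSpace.comap X inferInstance])
 :
    ∫ ω, (Y1 ω - Y0 ω) ∂μ = ∫ ω, (del 1 (X ω) - del 0 (X ω)) ∂μ :=
  identification_imputation_outcome_mean_general μ X V Z Y0 Y1 hX hV hZ hY0 hY1 hZ01 hYbd Y hYdef pi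
    hpi hA2 hA3 mo hmoM hmo del hdel
end

section
/- (Unbiasedness of the efficient influence function of Theorem 2) Under Assumptions (A1)–(A4), for each z ∈ {0,1}, E[φ_z] = E[Y_z]; consequently the efficient influence function ψ_eff = φ_1 − φ_0 − τ has mean zero. -/
/-!
Two applications of inverse probability weighting. If a `{0,1}`-valued `D` is conditionally
independent of `W` given `S` and `q(S) = E[D | S]`, then `(S, W)` has the same law under the
densities `D` and `q(S)`: on a rectangle this is `E[D · 1_B(W) | S] = E[D | S] · E[1_B(W) | S]`.
Hence `E[D / q(S) · F(S, W)] = E[F(S, W)]` whenever `q(S) > 0`, integrability included.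

With `D = R`, `S = X` (A1) this removes the factor `R / ρ(X)` from `φ_z`; with `D = 1{Z = z}`,
`S = (X, V)`, `W = Y_z` (A2, using `1{Z = z} Y = 1{Z = z} Y_z`) it turns the weighted residual
`1{Z = z} (Y - m) / (π^z (1 - π)^(1 - z))` into `Y_z - m`, so that `E[φ_z] = E[Y_z - m] + E[m] - E[δ] + E[δ]`.
-/

open MeasureTheory ProbabilityTheory

section CondIndep

variable {Ω β : Type*} {m mΩ : MeasurableSpace Ω} {μ : Measure Ω} [IsFiniteMeasure μ]
  [MeasurableSpace β] {D : Ω → ℝ} {W : Ω → β}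

lemma integrable_of_eq_zero_or_one (hD : Measurable D) (hD01 : ∀ ω, D ω = 0 ∨ D ω = 1) :
    Integrable D μ :=
  .of_bound hD.aestronglyMeasurable 1 <| ae_of_all _ fun ω => by
    rcases hD01 ω with h | h <;> simp [h]

lemma setIntegral_condExp_inter_preimage_of_condIndepFun [StandardBorelSpace Ω] {hm : m ≤ mΩ}
    (hD : Measurable D) (hW : Measurable W) (hD01 : ∀ ω, D ω = 0 ∨ D ω = 1)
    (hind : CondIndepFun m hm D W μ) {s : Set Ω} (hs : MeasurableSet[m] s) {B : Set β}
    (hB : MeasurableSet B) :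
    ∫ ω in s ∩ W ⁻¹' B, μ[D | m] ω ∂μ = ∫ ω in s ∩ W ⁻¹' B, D ω ∂μ := by
  have hWB : MeasurableSet (W ⁻¹' B) := hW hB
  have hD_ind : D = (D ⁻¹' {1}).indicator fun _ => 1 := by
    funext ω; rcases hD01 ω with h | h <;> simp [h]
  have hmul_ind : ∀ f : Ω → ℝ, (W ⁻¹' B).indicator f = f * (W ⁻¹' B).indicator fun _ => 1 := by
    intro f; funext ω; by_cases h : ω ∈ W ⁻¹' B <;> simp [h]
  have hint : Integrable (μ[D | m] * (W ⁻¹' B).indicator fun _ => 1) μ := by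
    rw [← hmul_ind]; exact integrable_condExp.indicator hWB
  have hprod := (condIndepFun_iff_condExp_inter_preimage_eq_mul hD hW).mp hind
    {1} B (measurableSet_singleton 1) hB
  rw [← hD_ind] at hprod
  have hpull : μ[μ[D | m] * (W ⁻¹' B).indicator (fun _ => 1) | m] =ᵐ[μ]
      μ[D | m] * μ⟦W ⁻¹' B | m⟧ :=
    condExp_mul_of_aestronglyMeasurable_left stronglyMeasurable_condExp.aestronglyMeasurable
      hint ((integrable_const 1).indicator hWB)
  calc ∫ ω in s ∩ W ⁻¹' B, μ[D | m] ω ∂μ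
      = ∫ ω in s, μ[μ[D | m] * (W ⁻¹' B).indicator (fun _ => 1) | m] ω ∂μ := by
        rw [← setIntegral_indicator hWB, hmul_ind, setIntegral_condExp hm hint hs]
    _ = ∫ ω in s, (μ⟦D ⁻¹' {1} ∩ W ⁻¹' B | m⟧) ω ∂μ :=
        setIntegral_congr_ae (hm s hs) ((hpull.trans hprod.symm).mono fun _ h _ => h)
    _ = ∫ ω in s ∩ W ⁻¹' B, D ω ∂μ := by
        rw [setIntegral_condExp hm ((integrable_const 1).indicator
            ((hD (measurableSet_singleton 1)).inter hWB)) hs, ← setIntegral_indicator hWB]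
        conv_rhs => rw [hD_ind, Set.indicator_indicator, Set.inter_comm]

end CondIndep

section WithDensity

variable {Ω β : Type*} [MeasurableSpace Ω] [MeasurableSpace β] {μ : Measure Ω} {Φ : Ω → β}
  {f : Ω → ℝ}

lemma integral_map_withDensity_ofReal (hΦ : Measurable Φ) (hf : AEMeasurable f μ)
    (hf0 : 0 ≤ᵐ[μ] f) {F : β → ℝ} (hF : Measurable F) :
    ∫ b, F b ∂(μ.withDensity fun ω => ENNReal.ofReal (f ω)).map Φ = ∫ ω, f ω * F (Φ ω) ∂μ := by
  rw [integral_map hΦ.aemeasurable hF.aestronglyMeasurable,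
    integral_withDensity_eq_integral_toReal_smul₀ hf.ennreal_ofReal
      (ae_of_all _ fun _ => ENNReal.ofReal_lt_top)]
  refine integral_congr_ae (hf0.mono fun ω h => ?_)
  simp [ENNReal.toReal_ofReal h]

lemma integrable_map_withDensity_ofReal_iff (hΦ : Measurable Φ) (hf : AEMeasurable f μ)
    (hf0 : 0 ≤ᵐ[μ] f) {F : β → ℝ} (hF : Measurable F) :
    Integrable F ((μ.withDensity fun ω => ENNReal.ofReal (f ω)).map Φ) ↔
      Integrable (fun ω => f ω * F (Φ ω)) μ := by
  rw [integrable_map_measure hF.aestronglyMeasurable hΦ.aemeasurable,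
    integrable_withDensity_iff_integrable_smul₀' hf.ennreal_ofReal
      (ae_of_all _ fun _ => ENNReal.ofReal_lt_top)]
  refine integrable_congr (hf0.mono fun ω h => ?_)
  simp [ENNReal.toReal_ofReal h]

end WithDensity

section InverseProbabilityWeighting

variable {Ω 𝒮 𝒲 : Type*} [MeasurableSpace Ω] [StandardBorelSpace Ω] [MeasurableSpace 𝒮]
  [MeasurableSpace 𝒲] {μ : Measure Ω} [IsFiniteMeasure μ] {S : Ω → 𝒮} {W : Ω → 𝒲}
  {D : Ω → ℝ} {q : 𝒮 → ℝ}

lemma map_withDensity_ofReal_eq_of_condIndepFun (hS : Measurable S) (hW : Measurable W)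
    (hD : Measurable D) (hD01 : ∀ ω, D ω = 0 ∨ D ω = 1)
    (hqD : (fun ω => q (S ω)) =ᵐ[μ] μ[D | MeasurableSpace.comap S inferInstance])
    (hind : CondIndepFun (MeasurableSpace.comap S inferInstance) hS.comap_le D W μ) :
    (μ.withDensity fun ω => ENNReal.ofReal (D ω)).map (fun ω => (S ω, W ω)) =
      (μ.withDensity fun ω => ENNReal.ofReal (q (S ω))).map (fun ω => (S ω, W ω)) := by
  have hDint : Integrable D μ := integrable_of_eq_zero_or_one hD hD01
  have hqint : Integrable (fun ω => q (S ω)) μ := integrable_condExp.congr hqD.symm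
  have hD0 : ∀ ω, 0 ≤ D ω := fun ω => by rcases hD01 ω with h | h <;> simp [h]
  have hq0 : 0 ≤ᵐ[μ] fun ω => q (S ω) := (condExp_nonneg (ae_of_all _ hD0)).trans_eq hqD.symm
  have := isFiniteMeasure_withDensity_ofReal hDint.2
  have hSW : Measurable fun ω => (S ω, W ω) := hS.prodMk hW
  have hrect : ∀ s ∈ Set.image2 (· ×ˢ ·) {A : Set 𝒮 | MeasurableSet A}
      {B : Set 𝒲 | MeasurableSet B},
      (μ.withDensity fun ω => ENNReal.ofReal (D ω)).map (fun ω => (S ω, W ω)) s =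
        (μ.withDensity fun ω => ENNReal.ofReal (q (S ω))).map (fun ω => (S ω, W ω)) s := by
    rintro _ ⟨A, hA, B, hB, rfl⟩
    have hSA : MeasurableSet[MeasurableSpace.comap S inferInstance] (S ⁻¹' A) := ⟨A, hA, rfl⟩
    have hSAWB : MeasurableSet (S ⁻¹' A ∩ W ⁻¹' B) := (hS hA).inter (hW hB)
    rw [Measure.map_apply hSW (hA.prod hB), Measure.map_apply hSW (hA.prod hB),
      Set.mk_preimage_prod, withDensity_apply _ hSAWB, withDensity_apply _ hSAWB,
      ← ofReal_integral_eq_lintegral_ofReal hDint.restrict (ae_of_all _ hD0),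
      ← ofReal_integral_eq_lintegral_ofReal hqint.restrict (ae_restrict_of_ae hq0),
      setIntegral_congr_ae hSAWB (hqD.mono fun _ h _ => h),
      setIntegral_condExp_inter_preimage_of_condIndepFun hD hW hD01 hind hSA hB]
  refine ext_of_generate_finite _ generateFrom_prod.symm isPiSystem_prod hrect ?_
  simpa using hrect _ ⟨Set.univ, .univ, Set.univ, .univ, Set.univ_prod_univ⟩

lemma integrable_div_mul_iff_of_condIndepFun (hS : Measurable S) (hW : Measurable W)
    (hD : Measurable D) (hD01 : ∀ ω, D ω = 0 ∨ D ω = 1) (hq : Measurable q)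
    (hqD : (fun ω => q (S ω)) =ᵐ[μ] μ[D | MeasurableSpace.comap S inferInstance])
    (hind : CondIndepFun (MeasurableSpace.comap S inferInstance) hS.comap_le D W μ)
    (hqpos : ∀ᵐ ω ∂μ, 0 < q (S ω)) {F : 𝒮 × 𝒲 → ℝ} (hF : Measurable F) :
    Integrable (fun ω => D ω / q (S ω) * F (S ω, W ω)) μ ↔
      Integrable (fun ω => F (S ω, W ω)) μ := by
  have hSW : Measurable fun ω => (S ω, W ω) := hS.prodMk hW
  have hFq : Measurable fun p : 𝒮 × 𝒲 => F p / q p.1 := hF.div (hq.comp measurable_fst)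
  calc Integrable (fun ω => D ω / q (S ω) * F (S ω, W ω)) μ
      ↔ Integrable (fun ω => D ω * (F (S ω, W ω) / q (S ω))) μ := by
        simp only [div_mul_eq_mul_div, mul_div_assoc]
    _ ↔ Integrable (fun ω => q (S ω) * (F (S ω, W ω) / q (S ω))) μ := by
        rw [← integrable_map_withDensity_ofReal_iff hSW hD.aemeasurable
            (ae_of_all _ fun ω => by rcases hD01 ω with h | h <;> simp [h]) hFq,
          map_withDensity_ofReal_eq_of_condIndepFun hS hW hD hD01 hqD hind,
          integrable_map_withDensity_ofReal_iff (f := fun ω => q (S ω)) hSW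
            (hq.comp hS).aemeasurable (hqpos.mono fun _ h => h.le) hFq]
    _ ↔ Integrable (fun ω => F (S ω, W ω)) μ :=
        integrable_congr (hqpos.mono fun _ h => mul_div_cancel₀ _ h.ne')

lemma integral_div_mul_eq_of_condIndepFun (hS : Measurable S) (hW : Measurable W)
    (hD : Measurable D) (hD01 : ∀ ω, D ω = 0 ∨ D ω = 1) (hq : Measurable q)
    (hqD : (fun ω => q (S ω)) =ᵐ[μ] μ[D | MeasurableSpace.comap S inferInstance])
    (hind : CondIndepFun (MeasurableSpace.comap S inferInstance) hS.comap_le D W μ)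
    (hqpos : ∀ᵐ ω ∂μ, 0 < q (S ω)) {F : 𝒮 × 𝒲 → ℝ} (hF : Measurable F) :
    ∫ ω, D ω / q (S ω) * F (S ω, W ω) ∂μ = ∫ ω, F (S ω, W ω) ∂μ := by
  have hSW : Measurable fun ω => (S ω, W ω) := hS.prodMk hW
  have hFq : Measurable fun p : 𝒮 × 𝒲 => F p / q p.1 := hF.div (hq.comp measurable_fst)
  calc ∫ ω, D ω / q (S ω) * F (S ω, W ω) ∂μ
      = ∫ ω, D ω * (F (S ω, W ω) / q (S ω)) ∂μ := by
        simp only [div_mul_eq_mul_div, mul_div_assoc]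
    _ = ∫ ω, q (S ω) * (F (S ω, W ω) / q (S ω)) ∂μ := by
        rw [← integral_map_withDensity_ofReal hSW hD.aemeasurable
            (ae_of_all _ fun ω => by rcases hD01 ω with h | h <;> simp [h]) hFq,
          map_withDensity_ofReal_eq_of_condIndepFun hS hW hD hD01 hqD hind,
          integral_map_withDensity_ofReal (f := fun ω => q (S ω)) hSW
            (hq.comp hS).aemeasurable (hqpos.mono fun _ h => h.le) hFq]
    _ = ∫ ω, F (S ω, W ω) ∂μ :=
        integral_congr_ae (hqpos.mono fun _ h => mul_div_cancel₀ _ h.ne')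

end InverseProbabilityWeighting

section AIPW

variable {Ω 𝒳 𝒱 : Type*} [MeasurableSpace Ω] [StandardBorelSpace Ω] [MeasurableSpace 𝒳]
  [MeasurableSpace 𝒱] {μ : Measure Ω} [IsFiniteMeasure μ] {X : Ω → 𝒳} {V : Ω → 𝒱}
  {R D Y Yz : Ω → ℝ} {ρ : 𝒳 → ℝ} {w m : 𝒳 × 𝒱 → ℝ} {δ : 𝒳 → ℝ}

lemma integrable_aipw_and_integral_aipw_eq (hX : Measurable X) (hV : Measurable V)
    (hR : Measurable R) (hD : Measurable D) (hY : Measurable Y) (hYz : Measurable Yz)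
    (hR01 : ∀ ω, R ω = 0 ∨ R ω = 1) (hD01 : ∀ ω, D ω = 0 ∨ D ω = 1)
    (hρ : Measurable ρ) (hw : Measurable w) (hm : Measurable m) (hδ : Measurable δ)
    (hρR : (fun ω => ρ (X ω)) =ᵐ[μ] μ[R | MeasurableSpace.comap X inferInstance])
    (hwD : (fun ω => w (X ω, V ω)) =ᵐ[μ]
      μ[D | MeasurableSpace.comap (fun ω => (X ω, V ω)) inferInstance])
    (hRind : CondIndepFun (MeasurableSpace.comap X inferInstance) hX.comap_le R
      (fun ω => (Y ω, D ω, V ω)) μ)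
    (hDind : CondIndepFun (MeasurableSpace.comap (fun ω => (X ω, V ω)) inferInstance)
      (hX.prodMk hV).comap_le D Yz μ)
    (hρpos : ∀ᵐ ω ∂μ, 0 < ρ (X ω)) (hwpos : ∀ᵐ ω ∂μ, 0 < w (X ω, V ω))
    (hDY : ∀ ω, D ω * Y ω = D ω * Yz ω) (hYzint : Integrable Yz μ)
    (hmint : Integrable (fun ω => m (X ω, V ω)) μ) (hδint : Integrable (fun ω => δ (X ω)) μ) :
    Integrable (fun ω => R ω / ρ (X ω) *
        (D ω * (Y ω - m (X ω, V ω)) / w (X ω, V ω) + m (X ω, V ω) - δ (X ω)) + δ (X ω)) μ ∧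
      ∫ ω, (R ω / ρ (X ω) *
        (D ω * (Y ω - m (X ω, V ω)) / w (X ω, V ω) + m (X ω, V ω) - δ (X ω)) + δ (X ω)) ∂μ =
      ∫ ω, Yz ω ∂μ := by
  have hXV : Measurable fun ω => (X ω, V ω) := hX.prodMk hV
  have hYDV : Measurable fun ω => (Y ω, D ω, V ω) := hY.prodMk (hD.prodMk hV)
  have hres : ∀ ω, D ω * (Y ω - m (X ω, V ω)) / w (X ω, V ω) =
      D ω / w (X ω, V ω) * (Yz ω - m (X ω, V ω)) := fun ω => by
    rw [div_mul_eq_mul_div, mul_sub, mul_sub, hDY]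
  have hFres : Measurable fun p : (𝒳 × 𝒱) × ℝ => p.2 - m p.1 := by fun_prop
  have hFG : Measurable fun p : 𝒳 × ℝ × ℝ × 𝒱 =>
      p.2.2.1 * (p.2.1 - m (p.1, p.2.2.2)) / w (p.1, p.2.2.2) + m (p.1, p.2.2.2) - δ p.1 := by
    fun_prop
  have hres_int : Integrable (fun ω => D ω * (Y ω - m (X ω, V ω)) / w (X ω, V ω)) μ := by
    simp only [hres]
    exact (integrable_div_mul_iff_of_condIndepFun hXV hYz hD hD01 hw hwD hDind hwpos hFres).2
      (hYzint.sub hmint)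
  have hres_eq : ∫ ω, D ω * (Y ω - m (X ω, V ω)) / w (X ω, V ω) ∂μ =
      ∫ ω, (Yz ω - m (X ω, V ω)) ∂μ := by
    simp only [hres]
    exact integral_div_mul_eq_of_condIndepFun hXV hYz hD hD01 hw hwD hDind hwpos hFres
  have hres_m_int : Integrable (fun ω =>
      D ω * (Y ω - m (X ω, V ω)) / w (X ω, V ω) + m (X ω, V ω)) μ := hres_int.add hmint
  have hRG_int : Integrable (fun ω => R ω / ρ (X ω) *
      (D ω * (Y ω - m (X ω, V ω)) / w (X ω, V ω) + m (X ω, V ω) - δ (X ω))) μ :=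
    (integrable_div_mul_iff_of_condIndepFun hX hYDV hR hR01 hρ hρR hRind hρpos hFG).2
      (hres_m_int.sub hδint)
  have hRG_eq : ∫ ω, R ω / ρ (X ω) *
      (D ω * (Y ω - m (X ω, V ω)) / w (X ω, V ω) + m (X ω, V ω) - δ (X ω)) ∂μ =
      ∫ ω, (D ω * (Y ω - m (X ω, V ω)) / w (X ω, V ω) + m (X ω, V ω) - δ (X ω)) ∂μ :=
    integral_div_mul_eq_of_condIndepFun hX hYDV hR hR01 hρ hρR hRind hρpos hFG
  refine ⟨hRG_int.add hδint, ?_⟩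
  rw [integral_add hRG_int hδint, hRG_eq, integral_sub hres_m_int hδint,
    integral_add hres_int hmint, hres_eq, integral_sub hYzint hmint]
  ring

end AIPW

lemma ae_eq_condExp_ite_eq {Ω : Type*} {m mΩ : MeasurableSpace Ω} {μ : Measure Ω}
    [IsFiniteMeasure μ] (hm : m ≤ mΩ) {Z p : Ω → ℝ} (hZ : Measurable Z)
    (hZ01 : ∀ ω, Z ω = 0 ∨ Z ω = 1) (hp : p =ᵐ[μ] μ[Z | m]) {z : ℝ} (hz : z = 0 ∨ z = 1) :
    (fun ω => p ω ^ z * (1 - p ω) ^ (1 - z)) =ᵐ[μ] μ[fun ω => if Z ω = z then 1 else 0 | m] := by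
  rcases hz with rfl | rfl
  · have hite : (fun ω => if Z ω = 0 then (1 : ℝ) else 0) = (fun _ => 1) - Z := by
      funext ω; rcases hZ01 ω with h | h <;> simp [h]
    rw [hite]
    filter_upwards [hp, condExp_sub (integrable_const 1) (integrable_of_eq_zero_or_one hZ hZ01) m]
      with ω hpω hsub
    simp [hsub, condExp_const hm, hpω]
  · have hite : (fun ω => if Z ω = 1 then (1 : ℝ) else 0) = Z := by
      funext ω; rcases hZ01 ω with h | h <;> simp [h]
    simpa [hite] using hp
theorem eif_unbiased_general
    {Ω 𝒳 𝒱 : Type*}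
    [MeasurableSpace Ω] [StandardBorelSpace Ω]
    [MeasurableSpace 𝒳]
    [MeasurableSpace 𝒱]
    (μ : Measure Ω) [IsProbabilityMeasure μ]
    (X : Ω → 𝒳) (V : Ω → 𝒱) (Z R Y0 Y1 : Ω → ℝ)
    (hX : Measurable X) (hV : Measurable V) (hZ : Measurable Z)
    (hR : Measurable R) (hY0 : Measurable Y0) (hY1 : Measurable Y1)
    (hZ01 : ∀ ω, Z ω = 0 ∨ Z ω = 1) (hR01 : ∀ ω, R ω = 0 ∨ R ω = 1)
    (hYbd : ∃ C, ∀ ω, |Y0 ω| ≤ C ∧ |Y1 ω| ≤ C)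
    (Y : Ω → ℝ) (hYdef : ∀ ω, Y ω = Z ω * Y1 ω + (1 - Z ω) * Y0 ω)
    (pi : 𝒳 × 𝒱 → ℝ) (rho : 𝒳 → ℝ)
    (hpiM : Measurable pi) (hrhoM : Measurable rho)
    (hpi : (fun ω => pi (X ω, V ω)) =ᵐ[μ]
      μ[Z | MeasurableSpace.comap (fun ω => (X ω, V ω)) inferInstance])
    (hrho : (fun ω => rho (X ω)) =ᵐ[μ]
      μ[R | MeasurableSpace.comap X inferInstance])
    (hA1 : CondIndepFun (MeasurableSpace.comap X inferInstance)
      (measurable_iff_comap_le.mp hX) R (fun ω => (Y ω, Z ω, V ω)) μ)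
    (hA2 : CondIndepFun (MeasurableSpace.comap (fun ω => (X ω, V ω)) inferInstance)
      (measurable_iff_comap_le.mp (hX.prodMk hV)) Z (fun ω => (Y0 ω, Y1 ω)) μ)
    (hA3 : ∀ᵐ ω ∂μ, 0 < pi (X ω, V ω) ∧ pi (X ω, V ω) < 1)
    (hA4 : ∀ᵐ ω ∂μ, 0 < rho (X ω))
    (mo : ℝ × 𝒳 × 𝒱 → ℝ) (hmoM : Measurable mo) (hmoBd : ∃ C, ∀ p, |mo p| ≤ C)
    (del : ℝ → 𝒳 → ℝ) (hdelM : ∀ z, Measurable (del z))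
    (hdel : ∀ z ∈ ({0, 1} : Set ℝ),
      (fun ω => del z (X ω)) =ᵐ[μ]
        μ[(fun ω => mo (z, X ω, V ω)) | MeasurableSpace.comap X inferInstance])
    (phi : ℝ → Ω → ℝ)
    (hphi : ∀ z ω, phi z ω =
      R ω / rho (X ω) *
          ((if Z ω = z then (1 : ℝ) else 0) * (Y ω - mo (z, X ω, V ω)) /
              (pi (X ω, V ω) ^ z * (1 - pi (X ω, V ω)) ^ (1 - z))
            + mo (z, X ω, V ω) - del z (X ω))
        + del z (X ω))
 :
    (∀ z ∈ ({0, 1} : Set ℝ),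
      ∫ ω, phi z ω ∂μ = ∫ ω, (if z = 1 then Y1 ω else Y0 ω) ∂μ) ∧
    ∫ ω, (phi 1 ω - phi 0 ω - ∫ ω', (Y1 ω' - Y0 ω') ∂μ) ∂μ = 0 := by
  obtain ⟨C, hC⟩ := hYbd
  obtain ⟨Cm, hCm⟩ := hmoBd
  have hY : Measurable Y := by rw [funext hYdef]; fun_prop
  have hYz : ∀ z : ℝ, Measurable fun ω => if z = 1 then Y1 ω else Y0 ω :=
    fun _ => hY1.ite (.const _) hY0
  have hYzint : ∀ z : ℝ, Integrable (fun ω => if z = 1 then Y1 ω else Y0 ω) μ := fun z =>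
    .of_bound (hYz z).aestronglyMeasurable C (ae_of_all _ fun ω => by
      split_ifs
      exacts [(hC ω).2, (hC ω).1])
  have arm : ∀ z ∈ ({0, 1} : Set ℝ), Integrable (phi z) μ ∧
      ∫ ω, phi z ω ∂μ = ∫ ω, (if z = 1 then Y1 ω else Y0 ω) ∂μ := by
    intro z hz
    have hz' : z = 0 ∨ z = 1 := hz
    have hite : Measurable fun t : ℝ => if t = z then (1 : ℝ) else 0 :=
      Measurable.ite (measurableSet_singleton z) measurable_const measurable_const
    have hRind := hA1.comp measurable_id
      (measurable_fst.prodMk ((hite.comp measurable_snd.fst).prodMk measurable_snd.snd))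
    have hDind := hA2.comp hite
      ((measurable_snd.ite (.const (z = 1)) measurable_fst : Measurable fun p : ℝ × ℝ =>
        if z = 1 then p.2 else p.1))
    have hwpos : ∀ᵐ ω ∂μ, 0 < pi (X ω, V ω) ^ z * (1 - pi (X ω, V ω)) ^ (1 - z) :=
      hA3.mono fun _ h =>
        mul_pos (Real.rpow_pos_of_pos h.1 z) (Real.rpow_pos_of_pos (sub_pos.2 h.2) _)
    have hDY : ∀ ω, (if Z ω = z then (1 : ℝ) else 0) * Y ω =
        (if Z ω = z then (1 : ℝ) else 0) * (if z = 1 then Y1 ω else Y0 ω) := fun ω => by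
      rw [hYdef ω]; rcases hz' with rfl | rfl <;> rcases hZ01 ω with h | h <;> simp [h]
    rw [show phi z = _ from funext (hphi z)]
    exact integrable_aipw_and_integral_aipw_eq (w := fun q => pi q ^ z * (1 - pi q) ^ (1 - z))
      (m := fun q => mo (z, q.1, q.2)) hX hV hR (hite.comp hZ) hY (hYz z) hR01
      (fun ω => by split_ifs <;> simp) hrhoM (by fun_prop) (by fun_prop) (hdelM z) hrho
      (ae_eq_condExp_ite_eq (hX.prodMk hV).comap_le hZ hZ01 hpi hz') hRind hDind hA4 hwpos hDY
      (hYzint z)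
      (.of_bound (hmoM.comp (measurable_const.prodMk (hX.prodMk hV))).aestronglyMeasurable Cm
        (ae_of_all _ fun _ => hCm _))
      (integrable_condExp.congr (hdel z hz).symm)
  refine ⟨fun z hz => (arm z hz).2, ?_⟩
  obtain ⟨h1int, h1⟩ := arm 1 (by simp)
  obtain ⟨h0int, h0⟩ := arm 0 (by simp)
  rw [integral_sub (f := fun ω => phi 1 ω - phi 0 ω) (h1int.sub h0int) (integrable_const _),
    integral_sub h1int h0int, integral_const, h1, h0,
    integral_sub (by simpa using hYzint 1) (by simpa using hYzint 0)]
  simp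

theorem eif_unbiased
    {Ω 𝒳 𝒱 : Type*}
    [MeasurableSpace Ω] [StandardBorelSpace Ω] [Nonempty Ω]
    [MeasurableSpace 𝒳] [StandardBorelSpace 𝒳]
    [MeasurableSpace 𝒱] [StandardBorelSpace 𝒱]
    (μ : Measure Ω) [IsProbabilityMeasure μ]
    (X : Ω → 𝒳) (V : Ω → 𝒱) (Z R Y0 Y1 : Ω → ℝ)
    (hX : Measurable X) (hV : Measurable V) (hZ : Measurable Z)
    (hR : Measurable R) (hY0 : Measurable Y0) (hY1 : Measurable Y1)
    (hZ01 : ∀ ω, Z ω = 0 ∨ Z ω = 1) (hR01 : ∀ ω, R ω = 0 ∨ R ω = 1)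
    (hYbd : ∃ C, ∀ ω, |Y0 ω| ≤ C ∧ |Y1 ω| ≤ C)
    (Y : Ω → ℝ) (hYdef : ∀ ω, Y ω = Z ω * Y1 ω + (1 - Z ω) * Y0 ω)
    (pi : 𝒳 × 𝒱 → ℝ) (rho : 𝒳 → ℝ)
    (hpiM : Measurable pi) (hrhoM : Measurable rho)
    (hpi : (fun ω => pi (X ω, V ω)) =ᵐ[μ]
      μ[Z | MeasurableSpace.comap (fun ω => (X ω, V ω)) inferInstance])
    (hrho : (fun ω => rho (X ω)) =ᵐ[μ]
      μ[R | MeasurableSpace.comap X inferInstance])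
    (hA1 : CondIndepFun (MeasurableSpace.comap X inferInstance)
      (measurable_iff_comap_le.mp hX) R (fun ω => (Y ω, Z ω, V ω)) μ)
    (hA2 : CondIndepFun (MeasurableSpace.comap (fun ω => (X ω, V ω)) inferInstance)
      (measurable_iff_comap_le.mp (hX.prodMk hV)) Z (fun ω => (Y0 ω, Y1 ω)) μ)
    (hA3 : ∀ᵐ ω ∂μ, 0 < pi (X ω, V ω) ∧ pi (X ω, V ω) < 1)
    (hA4 : ∀ᵐ ω ∂μ, 0 < rho (X ω))
    (mo : ℝ × 𝒳 × 𝒱 → ℝ) (hmoM : Measurable mo) (hmoBd : ∃ C, ∀ p, |mo p| ≤ C)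
    (hmo : (fun ω => mo (Z ω, X ω, V ω)) =ᵐ[μ]
      μ[Y | MeasurableSpace.comap (fun ω => (Z ω, X ω, V ω)) inferInstance])
    (del : ℝ → 𝒳 → ℝ) (hdelM : ∀ z, Measurable (del z))
    (hdel : ∀ z ∈ ({0, 1} : Set ℝ),
      (fun ω => del z (X ω)) =ᵐ[μ]
        μ[(fun ω => mo (z, X ω, V ω)) | MeasurableSpace.comap X inferInstance])
    (phi : ℝ → Ω → ℝ)
    (hphi : ∀ z ω, phi z ω =
      R ω / rho (X ω) *
          ((if Z ω = z then (1 : ℝ) else 0) * (Y ω - mo (z, X ω, V ω)) /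
              (pi (X ω, V ω) ^ z * (1 - pi (X ω, V ω)) ^ (1 - z))
            + mo (z, X ω, V ω) - del z (X ω))
        + del z (X ω))
 :
    (∀ z ∈ ({0, 1} : Set ℝ),
      ∫ ω, phi z ω ∂μ = ∫ ω, (if z = 1 then Y1 ω else Y0 ω) ∂μ) ∧
    ∫ ω, (phi 1 ω - phi 0 ω - ∫ ω', (Y1 ω' - Y0 ω') ∂μ) ∂μ = 0 :=
  eif_unbiased_general μ X V Z R Y0 Y1 hX hV hZ hR hY0 hY1 hZ01 hR01 hYbd Y hYdef pi rho hpiM hrhoM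
    hpi hrho hA1 hA2 hA3 hA4 mo hmoM hmoBd del hdelM hdel phi hphi
end

section
/- (Robustness of the triply robust functional under submodel M2: correct selection probability and outcome mean) Under Assumptions (A1)–(A4), for any ε > 0, any measurable function π* : 𝒳 × 𝒱 → [ε, 1−ε] and any bounded measurable function h* : 𝒳 → ℝ, one has E[ (R/ρ(X))·{ (Z/π*(X,V))·(Y − m(1,X,V)) − ((1−Z)/(1−π*(X,V)))·(Y − m(0,X,V)) + m(1,X,V) − m(0,X,V) − h*(X) } + h*(X) ] = τ. -/
/-!
Under (A1), `ρ(X)` is also a version of `E[R | X, Y, Z, V]`, so the selection weight `R / ρ(X)`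
is integrable and can be dropped in front of any bounded function of `(X, Y, Z, V)`: the outer
`h*` terms cancel and what is left is the mean of the augmented IPW score built from `π*` and `m`.
In each treatment arm the augmentation term `Z / π* · (Y - m(1, X, V))` has mean zero whatever
`π*` is, because `m(Z, X, V)` is the true regression of `Y` on `(Z, X, V)`. Finally
`E[m(1, X, V)] = E[Y₁]`: by (A2), `π(X, V)` is also a version of `E[Z | X, V, Y₀, Y₁]`, hence
`π · E[Y₁ | X, V] = E[Z Y₁ | X, V] = E[Z Y | X, V] = π · m(1, X, V)`, and `π > 0` by (A3).
-/

open MeasureTheory ProbabilityTheory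
open scoped ENNReal

section ConditionalExpectation

variable {Ω : Type*} {m m₀ : MeasurableSpace Ω} {μ : Measure Ω} [IsFiniteMeasure μ]

theorem ae_eq_condExp_of_forall_setIntegral_eq_of_isPiSystem (hm : m ≤ m₀)
    {S : Set (Set Ω)} (hmS : m = MeasurableSpace.generateFrom S) (hS : IsPiSystem S)
    {f g : Ω → ℝ} (hf : Integrable f μ) (hg : Integrable g μ) (hgm : StronglyMeasurable[m] g)
    (h_univ : ∫ ω, g ω ∂μ = ∫ ω, f ω ∂μ)
    (h_basic : ∀ s ∈ S, ∫ ω in s, g ω ∂μ = ∫ ω in s, f ω ∂μ) :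
    g =ᵐ[μ] μ[f | m] := by
  suffices h : ∀ s, MeasurableSet[m] s → ∫ ω in s, g ω ∂μ = ∫ ω in s, f ω ∂μ from
    ae_eq_condExp_of_forall_setIntegral_eq hm hf (fun s _ _ => hg.integrableOn)
      (fun s hs _ => h s hs) hgm.aestronglyMeasurable
  intro s hs
  induction s, hs using MeasurableSpace.induction_on_inter hmS hS with
  | empty => simp
  | basic s hs => exact h_basic s hs
  | compl s hs ih =>
    have hg_split := integral_add_compl (hm s hs) hg
    have hf_split := integral_add_compl (hm s hs) hf
    linarith
  | iUnion s hdisj hs ih =>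
    rw [integral_iUnion (fun i => hm _ (hs i)) hdisj hg.integrableOn,
      integral_iUnion (fun i => hm _ (hs i)) hdisj hf.integrableOn]
    exact tsum_congr ih

theorem condExp_one_sub (hm : m ≤ m₀) {f : Ω → ℝ} (hf : Integrable f μ) :
    μ[1 - f | m] =ᵐ[μ] 1 - μ[f | m] := by
  have h := condExp_sub (integrable_const (1 : ℝ)) hf m
  rwa [condExp_const hm] at h

theorem lintegral_ofReal_mul_eq_of_condExp (hm : m ≤ m₀) {f : Ω → ℝ} (hf : Integrable f μ)
    (hf0 : 0 ≤ᵐ[μ] f) {g : Ω → ℝ≥0∞} (hg : Measurable[m] g) :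
    ∫⁻ ω, ENNReal.ofReal (f ω) * g ω ∂μ = ∫⁻ ω, ENNReal.ofReal (μ[f | m] ω) * g ω ∂μ := by
  have h_trim : (μ.withDensity fun ω => ENNReal.ofReal (f ω)).trim hm
      = (μ.withDensity fun ω => ENNReal.ofReal (μ[f | m] ω)).trim hm := by
    refine @Measure.ext _ m _ _ fun s hs => ?_
    rw [trim_measurableSet_eq hm hs, trim_measurableSet_eq hm hs, withDensity_apply _ (hm s hs),
      withDensity_apply _ (hm s hs),
      ← ofReal_integral_eq_lintegral_ofReal hf.integrableOn (ae_restrict_of_ae hf0),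
      ← ofReal_integral_eq_lintegral_ofReal integrable_condExp.integrableOn
        (ae_restrict_of_ae (condExp_nonneg hf0)),
      setIntegral_condExp hm hf hs]
  have hg' : Measurable g := hg.mono hm le_rfl
  calc ∫⁻ ω, ENNReal.ofReal (f ω) * g ω ∂μ
      = ∫⁻ ω, g ω ∂((μ.withDensity fun ω => ENNReal.ofReal (f ω)).trim hm) := by
        rw [lintegral_trim hm hg, lintegral_withDensity_eq_lintegral_mul₀
          hf.aemeasurable.ennreal_ofReal hg'.aemeasurable]
        rfl
    _ = ∫⁻ ω, ENNReal.ofReal (μ[f | m] ω) * g ω ∂μ := by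
        rw [h_trim, lintegral_trim hm hg, lintegral_withDensity_eq_lintegral_mul₀
          (stronglyMeasurable_condExp.mono hm).measurable.ennreal_ofReal.aemeasurable
          hg'.aemeasurable]
        rfl

theorem integrable_div_of_condExp (hm : m ≤ m₀) {f r : Ω → ℝ} (hf : Integrable f μ)
    (hf0 : 0 ≤ᵐ[μ] f) (hr : Measurable[m] r) (hfr : r =ᵐ[μ] μ[f | m])
    (hr0 : ∀ᵐ ω ∂μ, 0 < r ω) :
    Integrable (fun ω => f ω / r ω) μ := by
  refine ⟨hf.aestronglyMeasurable.div₀ (hr.mono hm le_rfl).aestronglyMeasurable, ?_⟩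
  rw [hasFiniteIntegral_iff_ofReal
    (by filter_upwards [hf0, hr0] with ω h h' using div_nonneg h h'.le)]
  calc ∫⁻ ω, ENNReal.ofReal (f ω / r ω) ∂μ
      = ∫⁻ ω, ENNReal.ofReal (f ω) * ENNReal.ofReal (r ω)⁻¹ ∂μ := by
        refine lintegral_congr_ae ?_
        filter_upwards [hf0] with ω h
        rw [div_eq_mul_inv, ENNReal.ofReal_mul h]
    _ = ∫⁻ ω, ENNReal.ofReal (μ[f | m] ω) * ENNReal.ofReal (r ω)⁻¹ ∂μ :=
        lintegral_ofReal_mul_eq_of_condExp hm hf hf0 hr.inv.ennreal_ofReal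
    _ = ∫⁻ _, 1 ∂μ := by
        refine lintegral_congr_ae ?_
        filter_upwards [hfr, hr0] with ω h h'
        rw [← h, ← ENNReal.ofReal_mul h'.le, mul_inv_cancel₀ h'.ne', ENNReal.ofReal_one]
    _ < ⊤ := by simp

theorem integral_div_mul_eq_of_condExp (hm : m ≤ m₀) {f r φ : Ω → ℝ} (hf : Integrable f μ)
    (hr : StronglyMeasurable[m] r) (hfr : r =ᵐ[μ] μ[f | m]) (hr0 : ∀ᵐ ω ∂μ, r ω ≠ 0)
    (hφ : StronglyMeasurable[m] φ) (hint : Integrable (fun ω => f ω / r ω * φ ω) μ) :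
    ∫ ω, f ω / r ω * φ ω ∂μ = ∫ ω, φ ω ∂μ := by
  have h_comm : (fun ω => f ω / r ω * φ ω) = (fun ω => φ ω / r ω) * f := by
    ext ω; simp only [Pi.mul_apply]; ring
  rw [h_comm] at hint ⊢
  calc ∫ ω, ((fun ω => φ ω / r ω) * f) ω ∂μ
      = ∫ ω, μ[(fun ω => φ ω / r ω) * f | m] ω ∂μ := (integral_condExp hm).symm
    _ = ∫ ω, φ ω / r ω * μ[f | m] ω ∂μ :=
        integral_congr_ae (condExp_mul_of_stronglyMeasurable_left (hφ.div hr) hint hf)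
    _ = ∫ ω, φ ω ∂μ := by
        refine integral_congr_ae ?_
        filter_upwards [hfr, hr0] with ω h h'
        rw [← h, div_mul_cancel₀ _ h']

theorem integral_mul_sub_eq_zero_of_condExp (hm : m ≤ m₀) {g f q : Ω → ℝ}
    (hg : StronglyMeasurable[m] g) {c : ℝ} (hgc : ∀ᵐ ω ∂μ, ‖g ω‖ ≤ c) (hf : Integrable f μ)
    (hq : Integrable q μ) (hgq : g * μ[f | m] =ᵐ[μ] g * q) :
    ∫ ω, g ω * (f ω - q ω) ∂μ = 0 := by
  have hg' := (hg.mono hm).aestronglyMeasurable (μ := μ)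
  simp_rw [mul_sub]
  rw [integral_sub (hf.bdd_mul hg' hgc) (hq.bdd_mul hg' hgc), sub_eq_zero]
  calc ∫ ω, g ω * f ω ∂μ = ∫ ω, μ[g * f | m] ω ∂μ := (integral_condExp hm).symm
    _ = ∫ ω, (g * q) ω ∂μ :=
        integral_congr_ae ((condExp_stronglyMeasurable_mul_of_bound hm hg hf c hgc).trans hgq)

/-- `mS`, `mM`, `mB` play the roles of `σ(X, V)`, `σ(Z, X, V)` and `σ(X, V, Y₀, Y₁)`, `D` that of
the indicator of a treatment arm and `Ya` of its potential outcome. The proof cancels `μ[D | mS]`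
in `μ[D | mS] * μ[Ya | mS] = μ[D * Ya | mS] = μ[D * Y | mS] = μ[D | mS] * q`. -/
theorem condExp_eq_of_ignorable {mS mM mB : MeasurableSpace Ω} (hSM : mS ≤ mM) (hM : mM ≤ m₀)
    (hSB : mS ≤ mB) (hB : mB ≤ m₀) {D Y Ya q : Ω → ℝ} (hD : StronglyMeasurable[mM] D) {c : ℝ}
    (hDc : ∀ᵐ ω ∂μ, ‖D ω‖ ≤ c) (hDB : μ[D | mB] =ᵐ[μ] μ[D | mS])
    (hD0 : ∀ᵐ ω ∂μ, μ[D | mS] ω ≠ 0) (hY : Integrable Y μ) (hYa : StronglyMeasurable[mB] Ya)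
    (hYa_int : Integrable Ya μ) (hDY : ∀ ω, D ω ≠ 0 → Y ω = Ya ω)
    (hq : StronglyMeasurable[mS] q) (hq_int : Integrable q μ)
    (hYq : ∀ᵐ ω ∂μ, D ω ≠ 0 → μ[Y | mM] ω = q ω) :
    μ[Ya | mS] =ᵐ[μ] q := by
  have hD' := (hD.mono hM).aestronglyMeasurable (μ := μ)
  have hD_int : Integrable D μ := .of_bound hD' c hDc
  have hDS_bd : ∀ᵐ ω ∂μ, ‖μ[D | mS] ω‖ ≤ c := by
    simpa only [Real.norm_eq_abs] using
      ae_bdd_abs_condExp_of_ae_bdd_abs (m := mS) (by simpa only [Real.norm_eq_abs] using hDc)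
  have hDYa : D * Y = D * Ya := by
    ext ω; by_cases h : D ω = 0 <;> simp [h, hDY]
  have h_outcome : μ[D * Ya | mS] =ᵐ[μ] μ[D | mS] * μ[Ya | mS] :=
    calc μ[D * Ya | mS] =ᵐ[μ] μ[μ[D * Ya | mB] | mS] := (condExp_condExp_of_le hSB hB).symm
      _ =ᵐ[μ] μ[μ[D | mS] * Ya | mS] := condExp_congr_ae <|
          (condExp_mul_of_stronglyMeasurable_right hYa (hYa_int.bdd_mul hD' hDc) hD_int).trans
            (hDB.mul .rfl)
      _ =ᵐ[μ] μ[D | mS] * μ[Ya | mS] :=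
          condExp_stronglyMeasurable_mul_of_bound (hSB.trans hB) stronglyMeasurable_condExp
            hYa_int c hDS_bd
  have h_model : μ[D * Y | mS] =ᵐ[μ] μ[D | mS] * q :=
    calc μ[D * Y | mS] =ᵐ[μ] μ[μ[D * Y | mM] | mS] := (condExp_condExp_of_le hSM hM).symm
      _ =ᵐ[μ] μ[D * q | mS] := condExp_congr_ae <|
          (condExp_stronglyMeasurable_mul_of_bound hM hD hY c hDc).trans <| by
            filter_upwards [hYq] with ω h
            by_cases hω : D ω = 0 <;> simp [hω, h]
      _ =ᵐ[μ] μ[D | mS] * q :=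
          condExp_mul_of_stronglyMeasurable_right hq (hq_int.bdd_mul hD' hDc) hD_int
  rw [hDYa] at h_model
  filter_upwards [h_outcome, h_model, hD0] with ω h1 h2 h3
  exact mul_left_cancel₀ h3 (h1.symm.trans h2)

end ConditionalExpectation

theorem abs_div_le_inv_of_le {a b ε : ℝ} (ha : |a| ≤ 1) (hε : 0 < ε) (hb : ε ≤ b) :
    |a / b| ≤ ε⁻¹ := by
  rw [abs_div, abs_of_pos (hε.trans_le hb), ← one_div]
  exact div_le_div₀ zero_le_one ha hε hb

section AugmentedIPW

variable {Ω : Type*} {m₀ : MeasurableSpace Ω} {μ : Measure Ω}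

/-- The augmented inverse-probability-weighted score of one treatment arm, with arm indicator `D`,
working propensity `e` and working outcome regression `q`. -/
noncomputable def augmentedIPW (D e Y q : Ω → ℝ) (ω : Ω) : ℝ :=
  D ω / e ω * (Y ω - q ω) + q ω

theorem memLp_top_augmentedIPW {D e Y q : Ω → ℝ} (hD : AEStronglyMeasurable D μ)
    (he : AEStronglyMeasurable e μ) (hD1 : ∀ ω, |D ω| ≤ 1) {ε : ℝ} (hε : 0 < ε)
    (heε : ∀ ω, ε ≤ e ω) (hY : MemLp Y ⊤ μ) (hq : MemLp q ⊤ μ) :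
    MemLp (augmentedIPW D e Y q) ⊤ μ :=
  ((hY.sub hq).mul (memLp_top_of_bound (hD.div₀ he) ε⁻¹ (ae_of_all _ fun ω =>
    abs_div_le_inv_of_le (hD1 ω) hε (heε ω)))).add hq

theorem memLp_top_augmentedIPW_arms {D e Y q1 q0 : Ω → ℝ} (hD : AEStronglyMeasurable D μ)
    (he : AEStronglyMeasurable e μ) (hD01 : ∀ ω, D ω = 0 ∨ D ω = 1) {ε : ℝ} (hε : 0 < ε)
    (he_range : ∀ ω, ε ≤ e ω ∧ e ω ≤ 1 - ε) (hY : MemLp Y ⊤ μ) (hq1 : MemLp q1 ⊤ μ)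
    (hq0 : MemLp q0 ⊤ μ) :
    MemLp (augmentedIPW D e Y q1) ⊤ μ ∧ MemLp (augmentedIPW (1 - D) (1 - e) Y q0) ⊤ μ :=
  ⟨memLp_top_augmentedIPW hD he (fun ω => by rcases hD01 ω with h | h <;> simp [h]) hε
      (fun ω => (he_range ω).1) hY hq1,
    memLp_top_augmentedIPW (aestronglyMeasurable_const.sub hD)
      (aestronglyMeasurable_const.sub he) (fun ω => by rcases hD01 ω with h | h <;> simp [h]) hε
      (fun ω => by simp only [Pi.sub_apply, Pi.one_apply]; linarith [(he_range ω).2]) hY hq0⟩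

variable [IsFiniteMeasure μ]

theorem integral_augmentedIPW_eq {mS mM mB : MeasurableSpace Ω} (hSM : mS ≤ mM) (hM : mM ≤ m₀)
    (hSB : mS ≤ mB) (hB : mB ≤ m₀) {D e Y Ya q : Ω → ℝ} (hD : StronglyMeasurable[mM] D)
    (hD1 : ∀ ω, |D ω| ≤ 1) (hDB : μ[D | mB] =ᵐ[μ] μ[D | mS])
    (hD0 : ∀ᵐ ω ∂μ, μ[D | mS] ω ≠ 0) (he : StronglyMeasurable[mM] e) {ε : ℝ} (hε : 0 < ε)
    (heε : ∀ ω, ε ≤ e ω) (hY : Integrable Y μ) (hYa : StronglyMeasurable[mB] Ya)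
    (hYa_int : Integrable Ya μ) (hDY : ∀ ω, D ω ≠ 0 → Y ω = Ya ω)
    (hq : StronglyMeasurable[mS] q) (hq_int : Integrable q μ)
    (hYq : ∀ᵐ ω ∂μ, D ω ≠ 0 → μ[Y | mM] ω = q ω) :
    ∫ ω, augmentedIPW D e Y q ω ∂μ = ∫ ω, Ya ω ∂μ := by
  have hw_bd : ∀ᵐ ω ∂μ, ‖D ω / e ω‖ ≤ ε⁻¹ :=
    ae_of_all _ fun ω => abs_div_le_inv_of_le (hD1 ω) hε (heε ω)
  have hw_int : Integrable (fun ω => D ω / e ω * (Y ω - q ω)) μ :=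
    (hY.sub hq_int).bdd_mul ((hD.div he).mono hM).aestronglyMeasurable hw_bd
  have h_augmentation : ∫ ω, D ω / e ω * (Y ω - q ω) ∂μ = 0 := by
    refine integral_mul_sub_eq_zero_of_condExp hM (hD.div he) hw_bd hY hq_int ?_
    filter_upwards [hYq] with ω h
    by_cases hω : D ω = 0 <;> simp [hω, h]
  have h_outcome : ∫ ω, q ω ∂μ = ∫ ω, Ya ω ∂μ :=
    (integral_congr_ae (condExp_eq_of_ignorable hSM hM hSB hB hD
      (ae_of_all _ fun ω => (Real.norm_eq_abs _).trans_le (hD1 ω)) hDB hD0 hY hYa hYa_int hDY hq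
      hq_int hYq)).symm.trans (integral_condExp (hSB.trans hB))
  simp only [augmentedIPW]
  rw [integral_add hw_int hq_int, h_augmentation, h_outcome, zero_add]

theorem integral_augmentedIPW_sub_eq {mS mM mB : MeasurableSpace Ω} (hSM : mS ≤ mM)
    (hM : mM ≤ m₀) (hSB : mS ≤ mB) (hB : mB ≤ m₀) {D e Y Y0 Y1 q1 q0 : Ω → ℝ}
    (hD : StronglyMeasurable[mM] D) (hD01 : ∀ ω, D ω = 0 ∨ D ω = 1)
    (hDB : μ[D | mB] =ᵐ[μ] μ[D | mS]) (hD_pos : ∀ᵐ ω ∂μ, 0 < μ[D | mS] ω ∧ μ[D | mS] ω < 1)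
    (he : StronglyMeasurable[mM] e) {ε : ℝ} (hε : 0 < ε)
    (he_range : ∀ ω, ε ≤ e ω ∧ e ω ≤ 1 - ε)
    (hYdef : ∀ ω, Y ω = D ω * Y1 ω + (1 - D ω) * Y0 ω) (hY : MemLp Y ⊤ μ)
    (hY0 : StronglyMeasurable[mB] Y0) (hY1 : StronglyMeasurable[mB] Y1)
    (hY0_int : Integrable Y0 μ) (hY1_int : Integrable Y1 μ)
    (hq1 : StronglyMeasurable[mS] q1) (hq0 : StronglyMeasurable[mS] q0)
    (hq1_top : MemLp q1 ⊤ μ) (hq0_top : MemLp q0 ⊤ μ)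
    (hYq : ∀ᵐ ω ∂μ, μ[Y | mM] ω = D ω * q1 ω + (1 - D ω) * q0 ω) :
    ∫ ω, (augmentedIPW D e Y q1 - augmentedIPW (1 - D) (1 - e) Y q0) ω ∂μ
      = ∫ ω, (Y1 ω - Y0 ω) ∂μ := by
  have hD_int : Integrable D μ := .of_bound (hD.mono hM).aestronglyMeasurable 1
    (ae_of_all _ fun ω => by rcases hD01 ω with h | h <;> simp [h])
  have h1D_ind : μ[1 - D | mB] =ᵐ[μ] μ[1 - D | mS] := by
    filter_upwards [condExp_one_sub hB hD_int, condExp_one_sub (hSB.trans hB) hD_int, hDB]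
      with ω h h' h''
    simp only [h, h', Pi.sub_apply, h'']
  have h1D_pos : ∀ᵐ ω ∂μ, μ[1 - D | mS] ω ≠ 0 := by
    filter_upwards [condExp_one_sub (hSB.trans hB) hD_int, hD_pos] with ω h h'
    rw [h, Pi.sub_apply, Pi.one_apply]
    exact (sub_pos.2 h'.2).ne'
  have h_treated := integral_augmentedIPW_eq hSM hM hSB hB hD
    (fun ω => by rcases hD01 ω with h | h <;> simp [h]) hDB (hD_pos.mono fun ω h => h.1.ne')
    he hε (fun ω => (he_range ω).1) (hY.integrable le_top) hY1 hY1_int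
    (fun ω hz => by rcases hD01 ω with h | h <;> simp_all) hq1 (hq1_top.integrable le_top)
    (by filter_upwards [hYq] with ω h hz; rcases hD01 ω with h' | h' <;> simp_all)
  have h_control := integral_augmentedIPW_eq hSM hM hSB hB (D := 1 - D) (e := 1 - e)
    (stronglyMeasurable_const.sub hD) (fun ω => by rcases hD01 ω with h | h <;> simp [h])
    h1D_ind h1D_pos (stronglyMeasurable_const.sub he) hε
    (fun ω => by simp only [Pi.sub_apply, Pi.one_apply]; linarith [(he_range ω).2])
    (hY.integrable le_top) hY0 hY0_int (fun ω hz => by rcases hD01 ω with h | h <;> simp_all)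
    hq0 (hq0_top.integrable le_top)
    (by filter_upwards [hYq] with ω h hz; rcases hD01 ω with h' | h' <;> simp_all)
  have h_arms := memLp_top_augmentedIPW_arms (hD.mono hM).aestronglyMeasurable
    (he.mono hM).aestronglyMeasurable hD01 hε he_range hY hq1_top hq0_top
  simp only [Pi.sub_apply]
  rw [integral_sub (h_arms.1.integrable le_top) (h_arms.2.integrable le_top),
    integral_sub hY1_int hY0_int, h_treated, h_control]

end AugmentedIPW

section ConditionalIndependence

variable {Ω : Type*} {m m₀ : MeasurableSpace Ω} [StandardBorelSpace Ω] {μ : Measure Ω}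
  [IsFiniteMeasure μ]

theorem condExp_indicator_condExp_eq_of_condIndepFun {δ : Type*} [MeasurableSpace δ]
    {hm : m ≤ m₀} {W : Ω → δ} {B : Ω → ℝ} (hW : Measurable W)
    (hB : Measurable B) (hB01 : ∀ ω, B ω = 0 ∨ B ω = 1) (hind : CondIndepFun m hm B W μ)
    {A : Set δ} (hA : MeasurableSet A) :
    μ[(W ⁻¹' A).indicator (μ[B | m]) | m] =ᵐ[μ] μ[(W ⁻¹' A).indicator B | m] := by
  have hB_ind : B = (B ⁻¹' {1}).indicator fun _ => 1 := by
    ext ω; rcases hB01 ω with h | h <;> simp [h]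
  have h_left : (W ⁻¹' A).indicator (μ[B | m]) = μ[B | m] * (W ⁻¹' A).indicator fun _ => 1 := by
    ext ω; by_cases h : ω ∈ W ⁻¹' A <;> simp [h]
  have h_right : (W ⁻¹' A).indicator B = (B ⁻¹' {1} ∩ W ⁻¹' A).indicator fun _ => 1 := by
    ext ω; by_cases h : ω ∈ W ⁻¹' A <;> rcases hB01 ω with hω | hω <;> simp [h, hω]
  rw [h_left, h_right]
  refine (condExp_mul_of_stronglyMeasurable_left stronglyMeasurable_condExp
    (h_left ▸ integrable_condExp.indicator (hW hA))
    ((integrable_const 1).indicator (hW hA))).trans ?_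
  filter_upwards [(condIndepFun_iff_condExp_inter_preimage_eq_mul hB hW).mp hind {1} A
    (measurableSet_singleton 1) hA] with ω h
  rw [h, ← hB_ind]
  rfl

theorem condExp_comap_prodMk_eq_of_condIndepFun {γ δ : Type*} [MeasurableSpace γ]
    [MeasurableSpace δ] {U : Ω → γ} {W : Ω → δ} {B : Ω → ℝ}
    (hU : Measurable U) (hW : Measurable W) (hB : Measurable B)
    (hB01 : ∀ ω, B ω = 0 ∨ B ω = 1) {hmU : MeasurableSpace.comap U inferInstance ≤ m₀}
    (hind : CondIndepFun (MeasurableSpace.comap U inferInstance) hmU B W μ) :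
    μ[B | MeasurableSpace.comap (fun ω => (U ω, W ω)) inferInstance]
      =ᵐ[μ] μ[B | MeasurableSpace.comap U inferInstance] := by
  set T : Ω → γ × δ := fun ω => (U ω, W ω)
  have hB_int : Integrable B μ := .of_bound hB.aestronglyMeasurable 1
    (ae_of_all _ fun ω => by rcases hB01 ω with h | h <;> simp [h])
  have h_rect : ∀ {F : Ω → ℝ}, Integrable F μ → ∀ {A A'}, MeasurableSet A → MeasurableSet A' →
      ∫ ω in T ⁻¹' (A ×ˢ A'), F ω ∂μ = ∫ ω in U ⁻¹' A,
        μ[(W ⁻¹' A').indicator F | MeasurableSpace.comap U inferInstance] ω ∂μ := by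
    intro F hF A A' hA hA'
    rw [setIntegral_condExp hmU (hF.indicator (hW hA')) ⟨A, hA, rfl⟩,
      setIntegral_indicator (hW hA')]
    rfl
  refine (ae_eq_condExp_of_forall_setIntegral_eq_of_isPiSystem (hU.prodMk hW).comap_le
    (by rw [← generateFrom_prod, MeasurableSpace.comap_generateFrom]; rfl)
    (isPiSystem_prod.comap T) hB_int integrable_condExp
    (stronglyMeasurable_condExp.mono (measurable_fst.comp (comap_measurable T)).comap_le)
    (integral_condExp hmU) ?_).symm
  rintro _ ⟨_, ⟨A, hA, A', hA', rfl⟩, rfl⟩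
  rw [h_rect integrable_condExp hA hA', h_rect hB_int hA hA']
  exact integral_congr_ae (ae_restrict_of_ae
    (condExp_indicator_condExp_eq_of_condIndepFun hW hB hB01 hind hA'))

theorem integral_selection_augmented_eq {𝒳 𝒲 : Type*} [MeasurableSpace 𝒳]
    [MeasurableSpace 𝒲] {X : Ω → 𝒳} {W : Ω → 𝒲} {R : Ω → ℝ} {rho : 𝒳 → ℝ}
    (hX : Measurable X) (hW : Measurable W) (hR : Measurable R) (hR01 : ∀ ω, R ω = 0 ∨ R ω = 1)
    (hrhoM : Measurable rho)
    (hrho : (fun ω => rho (X ω)) =ᵐ[μ] μ[R | MeasurableSpace.comap X inferInstance])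
    {hmX : MeasurableSpace.comap X inferInstance ≤ m₀}
    (hind : CondIndepFun (MeasurableSpace.comap X inferInstance) hmX R W μ)
    (hrho0 : ∀ᵐ ω ∂μ, 0 < rho (X ω)) {φ g : Ω → ℝ}
    (hφ : StronglyMeasurable[MeasurableSpace.comap (fun ω => (X ω, W ω)) inferInstance] φ)
    (hg : StronglyMeasurable[MeasurableSpace.comap (fun ω => (X ω, W ω)) inferInstance] g)
    (hφ_top : MemLp φ ⊤ μ) (hg_top : MemLp g ⊤ μ) :
    ∫ ω, (R ω / rho (X ω) * (φ ω - g ω) + g ω) ∂μ = ∫ ω, φ ω ∂μ := by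
  have hR_int : Integrable R μ := .of_bound hR.aestronglyMeasurable 1
    (ae_of_all _ fun ω => by rcases hR01 ω with h | h <;> simp [h])
  have hR0 : 0 ≤ᵐ[μ] R := ae_of_all _ fun ω => by rcases hR01 ω with h | h <;> simp [h]
  have h_int : Integrable (fun ω => R ω / rho (X ω) * (φ ω - g ω)) μ :=
    (integrable_div_of_condExp hX.comap_le hR_int hR0 (hrhoM.comp (comap_measurable X)) hrho
      hrho0).mul_of_top_left (hφ_top.sub hg_top)
  have h_ipw : ∫ ω, R ω / rho (X ω) * (φ ω - g ω) ∂μ = ∫ ω, (φ ω - g ω) ∂μ :=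
    integral_div_mul_eq_of_condExp (hX.prodMk hW).comap_le hR_int
      (hrhoM.comp (measurable_fst.comp (comap_measurable _))).stronglyMeasurable
      (hrho.trans (condExp_comap_prodMk_eq_of_condIndepFun hX hW hR hR01 hind).symm)
      (hrho0.mono fun ω h => h.ne') (hφ.sub hg) h_int
  rw [integral_add h_int (hg_top.integrable le_top), h_ipw,
    integral_sub (hφ_top.integrable le_top) (hg_top.integrable le_top), sub_add_cancel]

theorem integral_augmentedIPW_sub_eq_of_condIndepFun {𝒳 𝒱 : Type*} [MeasurableSpace 𝒳]
    [MeasurableSpace 𝒱] {X : Ω → 𝒳} {V : Ω → 𝒱} {Z Y Y0 Y1 : Ω → ℝ}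
    (hX : Measurable X) (hV : Measurable V) (hZ : Measurable Z) (hY0 : Measurable Y0)
    (hY1 : Measurable Y1) (hZ01 : ∀ ω, Z ω = 0 ∨ Z ω = 1)
    (hYdef : ∀ ω, Y ω = Z ω * Y1 ω + (1 - Z ω) * Y0 ω) (hY : MemLp Y ⊤ μ)
    (hY0_int : Integrable Y0 μ) (hY1_int : Integrable Y1 μ) {pi : 𝒳 × 𝒱 → ℝ}
    (hpi : (fun ω => pi (X ω, V ω)) =ᵐ[μ]
      μ[Z | MeasurableSpace.comap (fun ω => (X ω, V ω)) inferInstance])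
    {hmXV : MeasurableSpace.comap (fun ω => (X ω, V ω)) inferInstance ≤ m₀}
    (hA2 : CondIndepFun (MeasurableSpace.comap (fun ω => (X ω, V ω)) inferInstance) hmXV
      Z (fun ω => (Y0 ω, Y1 ω)) μ)
    (hA3 : ∀ᵐ ω ∂μ, 0 < pi (X ω, V ω) ∧ pi (X ω, V ω) < 1)
    {mo : ℝ × 𝒳 × 𝒱 → ℝ} (hmoM : Measurable mo)
    (hmo_top : ∀ a, MemLp (fun ω => mo (a, X ω, V ω)) ⊤ μ)
    (hmo : (fun ω => mo (Z ω, X ω, V ω)) =ᵐ[μ]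
      μ[Y | MeasurableSpace.comap (fun ω => (Z ω, X ω, V ω)) inferInstance])
    {pistar : 𝒳 × 𝒱 → ℝ} (hpistarM : Measurable pistar) {ε : ℝ} (hε : 0 < ε)
    (hpistarRange : ∀ p, ε ≤ pistar p ∧ pistar p ≤ 1 - ε) :
    ∫ ω, (augmentedIPW Z (fun ω => pistar (X ω, V ω)) Y (fun ω => mo (1, X ω, V ω))
        - augmentedIPW (1 - Z) (1 - fun ω => pistar (X ω, V ω)) Y (fun ω => mo (0, X ω, V ω)))
        ω ∂μ
      = ∫ ω, (Y1 ω - Y0 ω) ∂μ := by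
  have hT_M := comap_measurable (m := inferInstance) (fun ω => (Z ω, X ω, V ω))
  have hT_B := comap_measurable (m := inferInstance) (fun ω => ((X ω, V ω), (Y0 ω, Y1 ω)))
  have hXV_M := measurable_snd.comp hT_M
  have hXV_B := measurable_fst.comp hT_B
  refine integral_augmentedIPW_sub_eq
    (mS := MeasurableSpace.comap (fun ω => (X ω, V ω)) inferInstance) hXV_M.comap_le
    (hZ.prodMk (hX.prodMk hV)).comap_le hXV_B.comap_le
    ((hX.prodMk hV).prodMk (hY0.prodMk hY1)).comap_le
    (measurable_fst.comp hT_M).stronglyMeasurable hZ01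
    (condExp_comap_prodMk_eq_of_condIndepFun (hX.prodMk hV) (hY0.prodMk hY1) hZ hZ01 hA2)
    (by filter_upwards [hpi, hA3] with ω h h'; rwa [← h])
    (hpistarM.comp hXV_M).stronglyMeasurable hε (fun ω => hpistarRange _) hYdef hY
    (measurable_fst.comp (measurable_snd.comp hT_B)).stronglyMeasurable
    (measurable_snd.comp (measurable_snd.comp hT_B)).stronglyMeasurable hY0_int hY1_int
    (hmoM.comp (measurable_const.prodMk (comap_measurable _))).stronglyMeasurable
    (hmoM.comp (measurable_const.prodMk (comap_measurable _))).stronglyMeasurable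
    (hmo_top 1) (hmo_top 0) ?_
  filter_upwards [hmo] with ω h
  rcases hZ01 ω with hz | hz <;> simp [← h, hz]

end ConditionalIndependence

theorem triply_robust_M2_general
    {Ω 𝒳 𝒱 : Type*}
    [MeasurableSpace Ω] [StandardBorelSpace Ω]
    [MeasurableSpace 𝒳]
    [MeasurableSpace 𝒱]
    (μ : Measure Ω) [IsProbabilityMeasure μ]
    (X : Ω → 𝒳) (V : Ω → 𝒱) (Z R Y0 Y1 : Ω → ℝ)
    (hX : Measurable X) (hV : Measurable V) (hZ : Measurable Z)
    (hR : Measurable R) (hY0 : Measurable Y0) (hY1 : Measurable Y1)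
    (hZ01 : ∀ ω, Z ω = 0 ∨ Z ω = 1) (hR01 : ∀ ω, R ω = 0 ∨ R ω = 1)
    (hYbd : ∃ C, ∀ ω, |Y0 ω| ≤ C ∧ |Y1 ω| ≤ C)
    (Y : Ω → ℝ) (hYdef : ∀ ω, Y ω = Z ω * Y1 ω + (1 - Z ω) * Y0 ω)
    (pi : 𝒳 × 𝒱 → ℝ) (rho : 𝒳 → ℝ)
    (hrhoM : Measurable rho)
    (hpi : (fun ω => pi (X ω, V ω)) =ᵐ[μ]
      μ[Z | MeasurableSpace.comap (fun ω => (X ω, V ω)) inferInstance])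
    (hrho : (fun ω => rho (X ω)) =ᵐ[μ]
      μ[R | MeasurableSpace.comap X inferInstance])
    (hA1 : CondIndepFun (MeasurableSpace.comap X inferInstance)
      (measurable_iff_comap_le.mp hX) R (fun ω => (Y ω, Z ω, V ω)) μ)
    (hA2 : CondIndepFun (MeasurableSpace.comap (fun ω => (X ω, V ω)) inferInstance)
      (measurable_iff_comap_le.mp (hX.prodMk hV)) Z (fun ω => (Y0 ω, Y1 ω)) μ)
    (hA3 : ∀ᵐ ω ∂μ, 0 < pi (X ω, V ω) ∧ pi (X ω, V ω) < 1)
    (hA4 : ∀ᵐ ω ∂μ, 0 < rho (X ω))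
    (mo : ℝ × 𝒳 × 𝒱 → ℝ) (hmoM : Measurable mo) (hmoBd : ∃ C, ∀ p, |mo p| ≤ C)
    (hmo : (fun ω => mo (Z ω, X ω, V ω)) =ᵐ[μ]
      μ[Y | MeasurableSpace.comap (fun ω => (Z ω, X ω, V ω)) inferInstance])
    (ε : ℝ) (hε : 0 < ε)
    (pistar : 𝒳 × 𝒱 → ℝ) (hpistarM : Measurable pistar)
    (hpistarRange : ∀ p, ε ≤ pistar p ∧ pistar p ≤ 1 - ε)
    (hstar : 𝒳 → ℝ) (hhstarM : Measurable hstar) (hhstarBd : ∃ C, ∀ x, |hstar x| ≤ C) :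
    ∫ ω, (R ω / rho (X ω)) *
          ((Z ω / pistar (X ω, V ω)) * (Y ω - mo (1, X ω, V ω))
            - ((1 - Z ω) / (1 - pistar (X ω, V ω))) * (Y ω - mo (0, X ω, V ω))
            + mo (1, X ω, V ω) - mo (0, X ω, V ω) - hstar (X ω))
        + hstar (X ω) ∂μ
      = ∫ ω, (Y1 ω - Y0 ω) ∂μ := by
  obtain ⟨C, hC⟩ := hYbd
  obtain ⟨Cm, hCm⟩ := hmoBd
  obtain ⟨Ch, hCh⟩ := hhstarBd
  have hY : Measurable Y := by rw [show Y = _ from funext hYdef]; fun_prop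
  have hY_top : MemLp Y ⊤ μ := memLp_top_of_bound hY.aestronglyMeasurable C <|
    ae_of_all _ fun ω => by rw [hYdef ω]; rcases hZ01 ω with h | h <;> simp [h, hC ω]
  have hmo_top : ∀ a, MemLp (fun ω => mo (a, X ω, V ω)) ⊤ μ := fun a =>
    memLp_top_of_bound (by fun_prop : Measurable _).aestronglyMeasurable Cm
      (ae_of_all _ fun _ => hCm _)
  have hh_top : MemLp (fun ω => hstar (X ω)) ⊤ μ :=
    memLp_top_of_bound (by fun_prop : Measurable _).aestronglyMeasurable Ch
      (ae_of_all _ fun _ => hCh _)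
  set ψ := augmentedIPW Z (fun ω => pistar (X ω, V ω)) Y (fun ω => mo (1, X ω, V ω))
    - augmentedIPW (1 - Z) (1 - fun ω => pistar (X ω, V ω)) Y (fun ω => mo (0, X ω, V ω))
  have hψ_top : MemLp ψ ⊤ μ := by
    have h_arms := memLp_top_augmentedIPW_arms hZ.aestronglyMeasurable
      (by fun_prop : Measurable fun ω => pistar (X ω, V ω)).aestronglyMeasurable hZ01 hε
      (fun ω => hpistarRange _) hY_top (hmo_top 1) (hmo_top 0)
    exact h_arms.1.sub h_arms.2
  have hT := comap_measurable (m := inferInstance) (fun ω => (X ω, (Y ω, Z ω, V ω)))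
  have hX_T := measurable_fst.comp hT
  have hY_T := measurable_fst.comp (measurable_snd.comp hT)
  have hZ_T := measurable_fst.comp (measurable_snd.comp (measurable_snd.comp hT))
  have hV_T := measurable_snd.comp (measurable_snd.comp (measurable_snd.comp hT))
  calc _ = ∫ ω, (R ω / rho (X ω) * (ψ ω - hstar (X ω)) + hstar (X ω)) ∂μ := by
        congr 1; ext ω; simp only [ψ, augmentedIPW, Pi.sub_apply, Pi.one_apply]; ring
    _ = ∫ ω, ψ ω ∂μ :=
        integral_selection_augmented_eq hX (hY.prodMk (hZ.prodMk hV)) hR hR01 hrhoM hrho hA1 hA4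
          (Measurable.stronglyMeasurable (by simp only [ψ]; unfold augmentedIPW; fun_prop))
          (Measurable.stronglyMeasurable (by fun_prop)) hψ_top hh_top
    _ = ∫ ω, (Y1 ω - Y0 ω) ∂μ :=
        integral_augmentedIPW_sub_eq_of_condIndepFun hX hV hZ hY0 hY1 hZ01 hYdef hY_top
          (.of_bound hY0.aestronglyMeasurable C (ae_of_all _ fun ω => (hC ω).1))
          (.of_bound hY1.aestronglyMeasurable C (ae_of_all _ fun ω => (hC ω).2))
          hpi hA2 hA3 hmoM hmo_top hmo hpistarM hε hpistarRange

theorem triply_robust_M2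
    {Ω 𝒳 𝒱 : Type*}
    [MeasurableSpace Ω] [StandardBorelSpace Ω] [Nonempty Ω]
    [MeasurableSpace 𝒳] [StandardBorelSpace 𝒳]
    [MeasurableSpace 𝒱] [StandardBorelSpace 𝒱]
    (μ : Measure Ω) [IsProbabilityMeasure μ]
    (X : Ω → 𝒳) (V : Ω → 𝒱) (Z R Y0 Y1 : Ω → ℝ)
    (hX : Measurable X) (hV : Measurable V) (hZ : Measurable Z)
    (hR : Measurable R) (hY0 : Measurable Y0) (hY1 : Measurable Y1)
    (hZ01 : ∀ ω, Z ω = 0 ∨ Z ω = 1) (hR01 : ∀ ω, R ω = 0 ∨ R ω = 1)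
    (hYbd : ∃ C, ∀ ω, |Y0 ω| ≤ C ∧ |Y1 ω| ≤ C)
    (Y : Ω → ℝ) (hYdef : ∀ ω, Y ω = Z ω * Y1 ω + (1 - Z ω) * Y0 ω)
    (pi : 𝒳 × 𝒱 → ℝ) (rho : 𝒳 → ℝ)
    (hpiM : Measurable pi) (hrhoM : Measurable rho)
    (hpi : (fun ω => pi (X ω, V ω)) =ᵐ[μ]
      μ[Z | MeasurableSpace.comap (fun ω => (X ω, V ω)) inferInstance])
    (hrho : (fun ω => rho (X ω)) =ᵐ[μ]
      μ[R | MeasurableSpace.comap X inferInstance])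
    (hA1 : CondIndepFun (MeasurableSpace.comap X inferInstance)
      (measurable_iff_comap_le.mp hX) R (fun ω => (Y ω, Z ω, V ω)) μ)
    (hA2 : CondIndepFun (MeasurableSpace.comap (fun ω => (X ω, V ω)) inferInstance)
      (measurable_iff_comap_le.mp (hX.prodMk hV)) Z (fun ω => (Y0 ω, Y1 ω)) μ)
    (hA3 : ∀ᵐ ω ∂μ, 0 < pi (X ω, V ω) ∧ pi (X ω, V ω) < 1)
    (hA4 : ∀ᵐ ω ∂μ, 0 < rho (X ω))
    (mo : ℝ × 𝒳 × 𝒱 → ℝ) (hmoM : Measurable mo) (hmoBd : ∃ C, ∀ p, |mo p| ≤ C)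
    (hmo : (fun ω => mo (Z ω, X ω, V ω)) =ᵐ[μ]
      μ[Y | MeasurableSpace.comap (fun ω => (Z ω, X ω, V ω)) inferInstance])
    (ε : ℝ) (hε : 0 < ε)
    (pistar : 𝒳 × 𝒱 → ℝ) (hpistarM : Measurable pistar)
    (hpistarRange : ∀ p, ε ≤ pistar p ∧ pistar p ≤ 1 - ε)
    (hstar : 𝒳 → ℝ) (hhstarM : Measurable hstar) (hhstarBd : ∃ C, ∀ x, |hstar x| ≤ C) :
    ∫ ω, (R ω / rho (X ω)) *
          ((Z ω / pistar (X ω, V ω)) * (Y ω - mo (1, X ω, V ω))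
            - ((1 - Z ω) / (1 - pistar (X ω, V ω))) * (Y ω - mo (0, X ω, V ω))
            + mo (1, X ω, V ω) - mo (0, X ω, V ω) - hstar (X ω))
        + hstar (X ω) ∂μ
      = ∫ ω, (Y1 ω - Y0 ω) ∂μ :=
  triply_robust_M2_general μ X V Z R Y0 Y1 hX hV hZ hR hY0 hY1 hZ01 hR01 hYbd Y hYdef pi rho hrhoM
    hpi hrho hA1 hA2 hA3 hA4 mo hmoM hmoBd hmo ε hε pistar hpistarM hpistarRange hstar hhstarM
    hhstarBd
end

section
/- (Robustness of the triply robust functional under submodel M3: correct outcome mean and imputation model) Under Assumptions (A1)–(A4), for any ε > 0 and ε' > 0, any measurable functions π* : 𝒳 × 𝒱 → [ε, 1−ε] and ρ* : 𝒳 → [ε', 1], and with h(X) a version of E[m(1,X,V) − m(0,X,V) | σ(X)], one has E[ (R/ρ*(X))·{ (Z/π*(X,V))·(Y − m(1,X,V)) − ((1−Z)/(1−π*(X,V)))·(Y − m(0,X,V)) + m(1,X,V) − m(0,X,V) − h(X) } + h(X) ] = τ. -/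
/-!
On `{Z = z}` with `z ∈ {0, 1}` the bracket of the functional equals
`(Z / π* - (1 - Z) / (1 - π*)) (Y - m(Z, X, V)) + (m(1, X, V) - m(0, X, V) - h(X))`,
a sum of two residuals, orthogonal to bounded functions of `(Z, X, V)` and of `X` respectively.
By (A1), `E[R | X, Y, Z, V] = ρ(X)` (checked on the π-system of rectangles), so the factor
`R / ρ*(X)` may be replaced by the function `ρ(X) / ρ*(X)` of `X`; the augmentation then has mean
zero whatever `π*` and `ρ*` are; their bounds `ε`, `ε'` only serve integrability.
What remains is `E[h(X)] = E[m(1, X, V) - m(0, X, V)]`. Finally (A2)-(A3) identify `E[m(1, X, V)]`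
with `E[Y₁]`: given `(X, V)`, `E[Z Y | X, V]` is both `π m(1, X, V)` (through the outcome
regression) and `π E[Y₁ | X, V]` (through `E[Z | X, V, Y₀, Y₁] = π`), and `π > 0` cancels;
likewise for `Y₀` with `1 - Z`.
-/

open MeasureTheory ProbabilityTheory Set
open scoped ENNReal

lemma IsPiSystem.image2_inter {Ω : Type*} {s t : Set (Set Ω)} (hs : IsPiSystem s)
    (ht : IsPiSystem t) : IsPiSystem (image2 (· ∩ ·) s t) := by
  rintro _ ⟨a, ha, b, hb, rfl⟩ _ ⟨a', ha', b', hb', rfl⟩ hne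
  refine ⟨a ∩ a', hs a ha a' ha' ?_, b ∩ b', ht b hb b' hb' ?_, by rw [inter_inter_inter_comm]⟩
  · exact hne.mono fun ω h => ⟨h.1.1, h.2.1⟩
  · exact hne.mono fun ω h => ⟨h.1.2, h.2.2⟩

lemma MeasurableSpace.sup_eq_generateFrom_image2_inter {Ω : Type*} (m₁ m₂ : MeasurableSpace Ω) :
    m₁ ⊔ m₂ = generateFrom
      (image2 (· ∩ ·) {s | MeasurableSet[m₁] s} {t | MeasurableSet[m₂] t}) := by
  refine le_antisymm (sup_le ?_ ?_) (generateFrom_le ?_)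
  · exact fun s hs => measurableSet_generateFrom ⟨s, hs, univ, MeasurableSet.univ, inter_univ s⟩
  · exact fun t ht => measurableSet_generateFrom ⟨univ, MeasurableSet.univ, t, ht, univ_inter t⟩
  · rintro _ ⟨s, hs, t, ht, rfl⟩
    exact (le_sup_left (b := m₂) s hs).inter (le_sup_right (a := m₁) t ht)

theorem setIntegral_eq_setIntegral_of_isPiSystem {Ω E : Type*} {m mΩ : MeasurableSpace Ω}
    {μ : Measure Ω} [NormedAddCommGroup E] [NormedSpace ℝ E] (hm : m ≤ mΩ)
    {s : Set (Set Ω)} (h_eq : m = MeasurableSpace.generateFrom s) (h_inter : IsPiSystem s)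
    {f g : Ω → E} (hf : Integrable f μ) (hg : Integrable g μ)
    (h_univ : ∫ x, f x ∂μ = ∫ x, g x ∂μ) (basic : ∀ t ∈ s, ∫ x in t, f x ∂μ = ∫ x in t, g x ∂μ)
    {t : Set Ω} (ht : MeasurableSet[m] t) : ∫ x in t, f x ∂μ = ∫ x in t, g x ∂μ := by
  induction t, ht using MeasurableSpace.induction_on_inter h_eq h_inter with
  | empty => simp
  | basic t ht => exact basic t ht
  | compl t ht h =>
    rw [setIntegral_compl (hm t ht) hf, setIntegral_compl (hm t ht) hg, h_univ, h]
  | iUnion t hdisj ht h =>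
    rw [integral_iUnion (fun i => hm _ (ht i)) hdisj hf.integrableOn,
      integral_iUnion (fun i => hm _ (ht i)) hdisj hg.integrableOn]
    exact tsum_congr h

lemma memLp_top_comp_of_abs_le {Ω α : Type*} [MeasurableSpace Ω] [MeasurableSpace α]
    {μ : Measure Ω} {g : α → ℝ} (hg : Measurable g) {C : ℝ} (hC : ∀ a, |g a| ≤ C)
    {T : Ω → α} (hT : Measurable T) : MemLp (fun ω => g (T ω)) ∞ μ :=
  memLp_top_of_bound (hg.comp hT).aestronglyMeasurable C (ae_of_all _ fun ω => hC (T ω))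

lemma memLp_top_div_of_abs_le_one {Ω : Type*} [MeasurableSpace Ω] {μ : Measure Ω}
    {f g : Ω → ℝ} (hf : Measurable f) (hg : Measurable g) (hf_le : ∀ ω, |f ω| ≤ 1)
    {ε : ℝ} (hε : 0 < ε) (hg_ge : ∀ ω, ε ≤ g ω) : MemLp (fun ω => f ω / g ω) ∞ μ := by
  refine memLp_top_of_bound (hf.div hg).aestronglyMeasurable ε⁻¹ (ae_of_all _ fun ω => ?_)
  have hg_pos : 0 < g ω := hε.trans_le (hg_ge ω)
  rw [Real.norm_eq_abs, abs_div, abs_of_pos hg_pos, div_le_iff₀ hg_pos]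
  calc |f ω| ≤ 1 := hf_le ω
    _ ≤ ε⁻¹ * g ω := by rw [inv_mul_eq_div, one_le_div hε]; exact hg_ge ω

section CondExp

variable {Ω : Type*} {m m' mY : MeasurableSpace Ω} [mΩ : MeasurableSpace Ω] {μ : Measure Ω}
  [IsFiniteMeasure μ]

theorem integral_mul_sub_eq_zero_of_ae_eq_condExp (hm : m ≤ mΩ) {u W w : Ω → ℝ}
    (hu : StronglyMeasurable[m] u) (hW : Integrable W μ) (hw : w =ᵐ[μ] μ[W | m])
    (huW : Integrable (u * (W - w)) μ) : ∫ ω, u ω * (W ω - w ω) ∂μ = 0 := by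
  have hw_int : Integrable w μ := integrable_condExp.congr hw.symm
  have h_res : μ[W - w | m] =ᵐ[μ] 0 := by
    filter_upwards [condExp_sub hW hw_int m, condExp_congr_ae hw, hw] with ω h₁ h₂ h₃
    rw [h₁, Pi.sub_apply, h₂,
      condExp_of_stronglyMeasurable hm stronglyMeasurable_condExp integrable_condExp, sub_self,
      Pi.zero_apply]
  calc ∫ ω, u ω * (W ω - w ω) ∂μ = ∫ ω, (μ[u * (W - w) | m]) ω ∂μ := (integral_condExp hm).symm
    _ = ∫ ω, u ω * (μ[W - w | m]) ω ∂μ :=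
        integral_congr_ae (condExp_mul_of_stronglyMeasurable_left hu huW (hW.sub hw_int))
    _ = 0 := integral_eq_zero_of_ae (h_res.mono fun ω h => by simp [h])

theorem condExp_one_sub_ae_eq (hm : m ≤ mΩ) {f : Ω → ℝ} (hf : Integrable f μ) :
    μ[fun ω => 1 - f ω | m] =ᵐ[μ] fun ω => 1 - (μ[f | m]) ω := by
  have h := condExp_sub (integrable_const (1 : ℝ)) hf m
  rw [condExp_const hm] at h
  exact h

theorem condExp_mul_ae_eq_condExp_mul_condExp (hmm' : m ≤ m') (hm' : m' ≤ mΩ) {f g : Ω → ℝ}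
    (hf : StronglyMeasurable[m'] f) (hfg : Integrable (f * g) μ) (hg : Integrable g μ) :
    μ[f * g | m] =ᵐ[μ] μ[f * μ[g | m'] | m] :=
  (condExp_condExp_of_le hmm' hm').symm.trans
    (condExp_congr_ae (condExp_mul_of_stronglyMeasurable_left hf hfg hg))

/-- `m`, `m'` and `mY` play the roles of `σ(X, V)`, `σ(Z, X, V)` and `σ(Y₀, Y₁)`, `ζ` of the
indicator of a treatment arm with propensity `p`, and `q` of the outcome regression on that arm. -/
theorem integral_outcomeRegression_eq_integral_potentialOutcome (hmm' : m ≤ m')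
    (hm' : m' ≤ mΩ) (hmY : mY ≤ mΩ) {ζ p q Y Y' : Ω → ℝ}
    (hζ : StronglyMeasurable[m'] ζ) (hp : StronglyMeasurable[m] p)
    (hq : StronglyMeasurable[m] q) (hY' : StronglyMeasurable[mY] Y')
    (hζ_bdd : MemLp ζ ∞ μ) (hq_bdd : MemLp q ∞ μ) (hY_int : Integrable Y μ)
    (hY'_int : Integrable Y' μ) (hζY : ζ * Y = ζ * Y')
    (h_outcome : ζ * q =ᵐ[μ] ζ * μ[Y | m']) (h_treat : p =ᵐ[μ] μ[ζ | m ⊔ mY])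
    (hp_pos : ∀ᵐ ω ∂μ, 0 < p ω) :
    ∫ ω, q ω ∂μ = ∫ ω, Y' ω ∂μ := by
  have hm : m ≤ mΩ := hmm'.trans hm'
  have hsup : m ⊔ mY ≤ mΩ := sup_le hm hmY
  have hζ_int : Integrable ζ μ := hζ_bdd.integrable le_top
  have hp_bdd : MemLp p ∞ μ := (hζ_bdd.condExp le_top).ae_eq h_treat.symm
  have hp_cond : p =ᵐ[μ] μ[ζ | m] := calc
    p = μ[p | m] := (condExp_of_stronglyMeasurable hm hp (hp_bdd.integrable le_top)).symm
    _ =ᵐ[μ] μ[μ[ζ | m ⊔ mY] | m] := condExp_congr_ae h_treat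
    _ =ᵐ[μ] μ[ζ | m] := condExp_condExp_of_le le_sup_left hsup
  have h_obs : μ[ζ * Y | m] =ᵐ[μ] q * p := calc
    μ[ζ * Y | m] =ᵐ[μ] μ[ζ * μ[Y | m'] | m] :=
        condExp_mul_ae_eq_condExp_mul_condExp hmm' hm' hζ (hY_int.mul_of_top_right hζ_bdd)
          hY_int
    _ =ᵐ[μ] μ[q * ζ | m] := by rw [mul_comm q]; exact condExp_congr_ae h_outcome.symm
    _ =ᵐ[μ] q * μ[ζ | m] :=
        condExp_mul_of_stronglyMeasurable_left hq (hζ_int.mul_of_top_right hq_bdd) hζ_int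
    _ =ᵐ[μ] q * p := hp_cond.symm.mul_left
  have h_pot : μ[ζ * Y' | m] =ᵐ[μ] p * μ[Y' | m] := calc
    μ[ζ * Y' | m] = μ[Y' * ζ | m] := by rw [mul_comm]
    _ =ᵐ[μ] μ[Y' * μ[ζ | m ⊔ mY] | m] :=
        condExp_mul_ae_eq_condExp_mul_condExp le_sup_left hsup (hY'.mono le_sup_right)
          (hY'_int.mul_of_top_left hζ_bdd) hζ_int
    _ =ᵐ[μ] μ[p * Y' | m] := by rw [mul_comm p]; exact condExp_congr_ae h_treat.symm.mul_left
    _ =ᵐ[μ] p * μ[Y' | m] :=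
        condExp_mul_of_stronglyMeasurable_left hp (hY'_int.mul_of_top_right hp_bdd) hY'_int
  have hq_cond : q =ᵐ[μ] μ[Y' | m] := by
    filter_upwards [h_obs, hζY ▸ h_pot, hp_pos] with ω h₁ h₂ hpω
    refine mul_left_cancel₀ hpω.ne' ?_
    simp only [Pi.mul_apply] at h₁ h₂
    rw [mul_comm, ← h₁, h₂]
  rw [integral_congr_ae hq_cond, integral_condExp hm]

end CondExp

section CondIndep

variable {Ω β : Type*} {m' : MeasurableSpace Ω} [mΩ : MeasurableSpace Ω] [mβ : MeasurableSpace β]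
  {μ : Measure Ω} [IsFiniteMeasure μ]

theorem condExp_indicator_sup_comap_ae_eq (hm' : m' ≤ mΩ) {E : Set Ω} (hE : MeasurableSet E)
    {S : Ω → β} (hS : Measurable S)
    (h_indep : ∀ B, MeasurableSet B →
      μ⟦E ∩ S ⁻¹' B | m'⟧ =ᵐ[μ] fun ω => (μ⟦E | m'⟧) ω * (μ⟦S ⁻¹' B | m'⟧) ω) :
    μ⟦E | m' ⊔ mβ.comap S⟧ =ᵐ[μ] μ⟦E | m'⟧ := by
  have hsup : m' ⊔ mβ.comap S ≤ mΩ := sup_le hm' hS.comap_le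
  have hE_int : Integrable (E.indicator fun _ => (1 : ℝ)) μ := (integrable_const 1).indicator hE
  refine (ae_eq_condExp_of_forall_setIntegral_eq hsup hE_int
    (fun _ _ _ => integrable_condExp.integrableOn) (fun t ht _ => ?_)
    (stronglyMeasurable_condExp.mono (le_sup_left (b := mβ.comap S))).aestronglyMeasurable).symm
  refine setIntegral_eq_setIntegral_of_isPiSystem hsup
    (MeasurableSpace.sup_eq_generateFrom_image2_inter _ _)
    ((@MeasurableSpace.isPiSystem_measurableSet _ m').image2_inter
      (@MeasurableSpace.isPiSystem_measurableSet _ (mβ.comap S)))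
    integrable_condExp hE_int (integral_condExp hm') ?_ ht
  rintro _ ⟨a, ha, _, ⟨B, hB, rfl⟩, rfl⟩
  have hSB : MeasurableSet (S ⁻¹' B) := hS hB
  have hSB_int : Integrable ((S ⁻¹' B).indicator fun _ => (1 : ℝ)) μ :=
    (integrable_const 1).indicator hSB
  have h_mul_int : Integrable (μ⟦E | m'⟧ * (S ⁻¹' B).indicator fun _ => (1 : ℝ)) μ :=
    integrable_condExp.mul_of_top_left ((memLp_top_const 1).indicator hSB)
  calc ∫ ω in a ∩ S ⁻¹' B, (μ⟦E | m'⟧) ω ∂μ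
      = ∫ ω in a, (μ⟦E | m'⟧ * (S ⁻¹' B).indicator fun _ => (1 : ℝ)) ω ∂μ := by
        rw [← setIntegral_indicator hSB]
        congr 1 with ω
        by_cases hω : ω ∈ S ⁻¹' B <;> simp [hω]
    _ = ∫ ω in a, (μ⟦E | m'⟧) ω * (μ⟦S ⁻¹' B | m'⟧) ω ∂μ := by
        rw [← setIntegral_condExp hm' h_mul_int ha]
        exact setIntegral_congr_ae (hm' a ha)
          ((condExp_mul_of_stronglyMeasurable_left stronglyMeasurable_condExp h_mul_int
            hSB_int).mono fun ω hω _ => hω)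
    _ = ∫ ω in a, (μ⟦E ∩ S ⁻¹' B | m'⟧) ω ∂μ :=
        setIntegral_congr_ae (hm' a ha) ((h_indep B hB).mono fun ω hω _ => hω.symm)
    _ = ∫ ω in a ∩ S ⁻¹' B, E.indicator (fun _ => (1 : ℝ)) ω ∂μ := by
        rw [setIntegral_condExp hm' ((integrable_const 1).indicator (hE.inter hSB)) ha,
          ← setIntegral_indicator hSB, indicator_indicator, inter_comm]

variable [StandardBorelSpace Ω]

theorem condExp_sup_comap_ae_eq_of_condIndepFun (hm' : m' ≤ mΩ) {R : Ω → ℝ}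
    (hR : Measurable R) (hR01 : ∀ ω, R ω = 0 ∨ R ω = 1) {S : Ω → β} (hS : Measurable S)
    (h_indep : CondIndepFun m' hm' R S μ) :
    μ[R | m' ⊔ mβ.comap S] =ᵐ[μ] μ[R | m'] := by
  have hR_ind : (R ⁻¹' {1}).indicator (fun _ => (1 : ℝ)) = R := by
    ext ω; rcases hR01 ω with h | h <;> simp [h]
  rw [← hR_ind]
  exact condExp_indicator_sup_comap_ae_eq hm' (hR (measurableSet_singleton 1)) hS fun B hB =>
    (condIndepFun_iff_condExp_inter_preimage_eq_mul hR hS).mp h_indep _ _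
      (measurableSet_singleton 1) hB

theorem integral_mul_eq_integral_mul_of_condIndepFun (hm' : m' ≤ mΩ) {R : Ω → ℝ}
    (hR : Measurable R) (hR01 : ∀ ω, R ω = 0 ∨ R ω = 1) {S : Ω → β} (hS : Measurable S)
    (h_indep : CondIndepFun m' hm' R S μ) {Φ ρ : Ω → ℝ}
    (hΦ : StronglyMeasurable[m' ⊔ mβ.comap S] Φ) (hΦ_bdd : MemLp Φ ∞ μ)
    (hρ : ρ =ᵐ[μ] μ[R | m']) :
    ∫ ω, Φ ω * R ω ∂μ = ∫ ω, Φ ω * ρ ω ∂μ := by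
  have hR_int : Integrable R μ := (memLp_top_of_bound hR.aestronglyMeasurable 1
    (ae_of_all _ fun ω => by rcases hR01 ω with h | h <;> simp [h])).integrable le_top
  have hρ_int : Integrable ρ μ := integrable_condExp.congr hρ.symm
  have hΦR : Integrable (fun ω => Φ ω * R ω) μ := hR_int.mul_of_top_right hΦ_bdd
  have hΦρ : Integrable (fun ω => Φ ω * ρ ω) μ := hρ_int.mul_of_top_right hΦ_bdd
  have h := integral_mul_sub_eq_zero_of_ae_eq_condExp (sup_le hm' hS.comap_le) hΦ hR_int
    (hρ.trans (condExp_sup_comap_ae_eq_of_condIndepFun hm' hR hR01 hS h_indep).symm)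
    ((hR_int.sub hρ_int).mul_of_top_right hΦ_bdd)
  simp_rw [mul_sub] at h
  rwa [integral_sub hΦR hΦρ, sub_eq_zero] at h

end CondIndep

section Augmentation

variable {𝒳 𝒱 : Type*} (mo : ℝ × 𝒳 × 𝒱 → ℝ) (pistar : 𝒳 × 𝒱 → ℝ) (h : 𝒳 → ℝ)

noncomputable def augmentation (x : 𝒳) (y z : ℝ) (v : 𝒱) : ℝ :=
  (z / pistar (x, v)) * (y - mo (1, x, v))
    - ((1 - z) / (1 - pistar (x, v))) * (y - mo (0, x, v))
    + mo (1, x, v) - mo (0, x, v) - h x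

variable {mo pistar h}

lemma augmentation_eq_of_eq_zero_or_one {x : 𝒳} {y z : ℝ} {v : 𝒱} (hz : z = 0 ∨ z = 1) :
    augmentation mo pistar h x y z v
      = (z / pistar (x, v) - (1 - z) / (1 - pistar (x, v))) * (y - mo (z, x, v))
        + (mo (1, x, v) - mo (0, x, v) - h x) := by
  rcases hz with rfl | rfl <;> simp only [augmentation] <;> ring

lemma measurable_augmentation [MeasurableSpace 𝒳] [MeasurableSpace 𝒱] (hmo : Measurable mo)
    (hpistar : Measurable pistar) (hh : Measurable h) :
    Measurable fun o : 𝒳 × ℝ × ℝ × 𝒱 => augmentation mo pistar h o.1 o.2.1 o.2.2.1 o.2.2.2 := by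
  unfold augmentation
  fun_prop

end Augmentation

section PotentialOutcomes

variable {Ω 𝒳 𝒱 : Type*} [MeasurableSpace Ω] [MeasurableSpace 𝒳] [MeasurableSpace 𝒱]
  {μ : Measure Ω} {X : Ω → 𝒳} {V : Ω → 𝒱} {Z Y : Ω → ℝ}
  {mo : ℝ × 𝒳 × 𝒱 → ℝ} {pistar : 𝒳 × 𝒱 → ℝ} {h : 𝒳 → ℝ} {C ε : ℝ}

lemma memLp_top_div_propensity (hX : Measurable X) (hV : Measurable V) (hZ : Measurable Z)
    (hZ01 : ∀ ω, Z ω = 0 ∨ Z ω = 1) (hε : 0 < ε) (hpistarM : Measurable pistar)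
    (hpistarRange : ∀ p, ε ≤ pistar p ∧ pistar p ≤ 1 - ε) :
    MemLp (fun ω => Z ω / pistar (X ω, V ω)) ∞ μ
      ∧ MemLp (fun ω => (1 - Z ω) / (1 - pistar (X ω, V ω))) ∞ μ := by
  have hZ_abs (ω : Ω) : |Z ω| ≤ 1 ∧ |1 - Z ω| ≤ 1 := by
    rcases hZ01 ω with h | h <;> norm_num [h]
  exact ⟨memLp_top_div_of_abs_le_one hZ (by fun_prop) (fun ω => (hZ_abs ω).1) hε
      fun ω => (hpistarRange _).1,
    memLp_top_div_of_abs_le_one (by fun_prop) (by fun_prop) (fun ω => (hZ_abs ω).2) hε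
      fun ω => by linarith [(hpistarRange (X ω, V ω)).2]⟩

theorem memLp_top_augmentation (hX : Measurable X) (hV : Measurable V) (hZ : Measurable Z)
    (hZ01 : ∀ ω, Z ω = 0 ∨ Z ω = 1) (hY_bdd : MemLp Y ∞ μ) (hmoM : Measurable mo)
    (hmo_bdd : ∀ p, |mo p| ≤ C) (hε : 0 < ε) (hpistarM : Measurable pistar)
    (hpistarRange : ∀ p, ε ≤ pistar p ∧ pistar p ≤ 1 - ε)
    (hh : (fun ω => h (X ω)) =ᵐ[μ]
      μ[(fun ω => mo (1, X ω, V ω) - mo (0, X ω, V ω)) | MeasurableSpace.comap X inferInstance]) :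
    MemLp (fun ω => augmentation mo pistar h (X ω) (Y ω) (Z ω) (V ω)) ∞ μ := by
  obtain ⟨hw₁, hw₀⟩ := memLp_top_div_propensity (μ := μ) hX hV hZ hZ01 hε hpistarM hpistarRange
  have hmo₁ := memLp_top_comp_of_abs_le (μ := μ) hmoM hmo_bdd
    (by fun_prop : Measurable fun ω => ((1 : ℝ), X ω, V ω))
  have hmo₀ := memLp_top_comp_of_abs_le (μ := μ) hmoM hmo_bdd
    (by fun_prop : Measurable fun ω => ((0 : ℝ), X ω, V ω))
  have hh_bdd : MemLp (fun ω => h (X ω)) ∞ μ := ((hmo₁.sub hmo₀).condExp le_top).ae_eq hh.symm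
  exact (((hY_bdd.sub hmo₁).mul' hw₁).sub ((hY_bdd.sub hmo₀).mul' hw₀)).add hmo₁ |>.sub hmo₀
    |>.sub hh_bdd

theorem integral_mul_augmentation_eq_zero [IsFiniteMeasure μ] (hX : Measurable X)
    (hV : Measurable V) (hZ : Measurable Z) (hZ01 : ∀ ω, Z ω = 0 ∨ Z ω = 1) (hY_bdd : MemLp Y ∞ μ)
    (hmoM : Measurable mo) (hmo_bdd : ∀ p, |mo p| ≤ C)
    (hmo : (fun ω => mo (Z ω, X ω, V ω)) =ᵐ[μ]
      μ[Y | MeasurableSpace.comap (fun ω => (Z ω, X ω, V ω)) inferInstance])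
    (hε : 0 < ε) (hpistarM : Measurable pistar)
    (hpistarRange : ∀ p, ε ≤ pistar p ∧ pistar p ≤ 1 - ε)
    (hh : (fun ω => h (X ω)) =ᵐ[μ]
      μ[(fun ω => mo (1, X ω, V ω) - mo (0, X ω, V ω)) | MeasurableSpace.comap X inferInstance])
    {w : Ω → ℝ} (hw : StronglyMeasurable[MeasurableSpace.comap X inferInstance] w)
    (hw_bdd : MemLp w ∞ μ) :
    ∫ ω, w ω * augmentation mo pistar h (X ω) (Y ω) (Z ω) (V ω) ∂μ = 0 := by
  obtain ⟨hw₁, hw₀⟩ := memLp_top_div_propensity (μ := μ) hX hV hZ hZ01 hε hpistarM hpistarRange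
  have hmo₁ := memLp_top_comp_of_abs_le (μ := μ) hmoM hmo_bdd
    (by fun_prop : Measurable fun ω => ((1 : ℝ), X ω, V ω))
  have hmo₀ := memLp_top_comp_of_abs_le (μ := μ) hmoM hmo_bdd
    (by fun_prop : Measurable fun ω => ((0 : ℝ), X ω, V ω))
  have hmoZ := memLp_top_comp_of_abs_le (μ := μ) hmoM hmo_bdd (hZ.prodMk (hX.prodMk hV))
  have hh_bdd : MemLp (fun ω => h (X ω)) ∞ μ := ((hmo₁.sub hmo₀).condExp le_top).ae_eq hh.symm
  set a : Ω → ℝ := fun ω =>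
    w ω * (Z ω / pistar (X ω, V ω) - (1 - Z ω) / (1 - pistar (X ω, V ω))) with ha_def
  have ha : StronglyMeasurable[MeasurableSpace.comap (fun ω => (Z ω, X ω, V ω)) inferInstance]
      a := by
    refine (hw.mono (measurable_fst.comp (measurable_snd.comp
      (comap_measurable fun ω => (Z ω, X ω, V ω)))).comap_le).mul
      (Measurable.stronglyMeasurable ?_)
    exact (by fun_prop : Measurable fun o : ℝ × 𝒳 × 𝒱 =>
      o.1 / pistar o.2 - (1 - o.1) / (1 - pistar o.2)).comp (comap_measurable _)
  have h_out_int : Integrable (fun ω => a ω * (Y ω - mo (Z ω, X ω, V ω))) μ :=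
    ((hY_bdd.sub hmoZ).integrable le_top).mul_of_top_right ((hw₁.sub hw₀).mul' hw_bdd)
  have h_imp_int : Integrable
      (fun ω => w ω * (mo (1, X ω, V ω) - mo (0, X ω, V ω) - h (X ω))) μ :=
    (((hmo₁.sub hmo₀).sub hh_bdd).integrable le_top).mul_of_top_right hw_bdd
  calc _ = ∫ ω, (a ω * (Y ω - mo (Z ω, X ω, V ω))
          + w ω * (mo (1, X ω, V ω) - mo (0, X ω, V ω) - h (X ω))) ∂μ := by
        congr 1 with ω
        rw [augmentation_eq_of_eq_zero_or_one (hZ01 ω), ha_def]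
        ring
    _ = 0 := by
        rw [integral_add h_out_int h_imp_int,
          integral_mul_sub_eq_zero_of_ae_eq_condExp (hZ.prodMk (hX.prodMk hV)).comap_le ha
            (hY_bdd.integrable le_top) hmo h_out_int,
          integral_mul_sub_eq_zero_of_ae_eq_condExp hX.comap_le hw
            (W := fun ω => mo (1, X ω, V ω) - mo (0, X ω, V ω))
            ((hmo₁.sub hmo₀).integrable le_top) hh h_imp_int, add_zero]

theorem integral_triplyRobust_eq_integral_imputation [StandardBorelSpace Ω] [IsFiniteMeasure μ]
    {R : Ω → ℝ} (hX : Measurable X) (hV : Measurable V) (hZ : Measurable Z) (hR : Measurable R)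
    (hY : Measurable Y) (hZ01 : ∀ ω, Z ω = 0 ∨ Z ω = 1) (hR01 : ∀ ω, R ω = 0 ∨ R ω = 1)
    (hY_bdd : MemLp Y ∞ μ) {rho : 𝒳 → ℝ} (hrhoM : Measurable rho)
    (hrho : (fun ω => rho (X ω)) =ᵐ[μ] μ[R | MeasurableSpace.comap X inferInstance])
    (hA1 : CondIndepFun (MeasurableSpace.comap X inferInstance)
      (measurable_iff_comap_le.mp hX) R (fun ω => (Y ω, Z ω, V ω)) μ)
    (hmoM : Measurable mo) (hmo_bdd : ∀ p, |mo p| ≤ C)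
    (hmo : (fun ω => mo (Z ω, X ω, V ω)) =ᵐ[μ]
      μ[Y | MeasurableSpace.comap (fun ω => (Z ω, X ω, V ω)) inferInstance])
    {ε' : ℝ} (hε : 0 < ε) (hε' : 0 < ε') (hpistarM : Measurable pistar)
    (hpistarRange : ∀ p, ε ≤ pistar p ∧ pistar p ≤ 1 - ε)
    {rhostar : 𝒳 → ℝ} (hrhostarM : Measurable rhostar) (hrhostarRange : ∀ x, ε' ≤ rhostar x)
    (hhM : Measurable h)
    (hh : (fun ω => h (X ω)) =ᵐ[μ]
      μ[(fun ω => mo (1, X ω, V ω) - mo (0, X ω, V ω)) | MeasurableSpace.comap X inferInstance]) :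
    ∫ ω, R ω / rhostar (X ω) * augmentation mo pistar h (X ω) (Y ω) (Z ω) (V ω) + h (X ω) ∂μ
      = ∫ ω, h (X ω) ∂μ := by
  have hs_bdd : MemLp (fun ω => 1 / rhostar (X ω)) ∞ μ :=
    memLp_top_div_of_abs_le_one measurable_const (hrhostarM.comp hX) (fun _ => by simp) hε'
      fun ω => hrhostarRange (X ω)
  have hR_bdd : MemLp R ∞ μ := memLp_top_of_bound hR.aestronglyMeasurable 1
    (ae_of_all _ fun ω => by rcases hR01 ω with h | h <;> simp [h])
  have hρ_bdd : MemLp (fun ω => rho (X ω)) ∞ μ := (hR_bdd.condExp le_top).ae_eq hrho.symm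
  set Φ : Ω → ℝ := fun ω => 1 / rhostar (X ω) * augmentation mo pistar h (X ω) (Y ω) (Z ω) (V ω)
    with hΦ_def
  have hΦ_bdd : MemLp Φ ∞ μ := (memLp_top_augmentation hX hV hZ hZ01 hY_bdd hmoM hmo_bdd hε
    hpistarM hpistarRange hh).mul' hs_bdd
  have hS : Measurable fun ω => (Y ω, Z ω, V ω) := by fun_prop
  have hΦ : StronglyMeasurable[MeasurableSpace.comap X inferInstance ⊔
      MeasurableSpace.comap (fun ω => (Y ω, Z ω, V ω)) inferInstance] Φ := by
    rw [← MeasurableSpace.comap_prodMk]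
    exact (((measurable_const.div (hrhostarM.comp measurable_fst)).mul
      (measurable_augmentation hmoM hpistarM hhM)).comp (comap_measurable _)).stronglyMeasurable
  have hw : StronglyMeasurable[MeasurableSpace.comap X inferInstance]
      fun ω => 1 / rhostar (X ω) * rho (X ω) :=
    (((measurable_const.div hrhostarM).mul hrhoM).comp (comap_measurable X)).stronglyMeasurable
  have hh_int : Integrable (fun ω => h (X ω)) μ := integrable_condExp.congr hh.symm
  have hΦR_int : Integrable (fun ω => Φ ω * R ω) μ :=
    (hR_bdd.integrable le_top).mul_of_top_right hΦ_bdd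
  have h_zero : ∫ ω, Φ ω * rho (X ω) ∂μ = 0 := by
    rw [← integral_mul_augmentation_eq_zero hX hV hZ hZ01 hY_bdd hmoM hmo_bdd hmo hε hpistarM
      hpistarRange hh hw (hρ_bdd.mul' hs_bdd)]
    congr 1 with ω
    rw [hΦ_def]
    ring
  calc _ = ∫ ω, Φ ω * R ω ∂μ + ∫ ω, h (X ω) ∂μ := by
        rw [← integral_add hΦR_int hh_int]
        congr 1 with ω
        rw [hΦ_def]
        ring
    _ = ∫ ω, Φ ω * rho (X ω) ∂μ + ∫ ω, h (X ω) ∂μ := by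
        rw [integral_mul_eq_integral_mul_of_condIndepFun hX.comap_le hR hR01 hS hA1 hΦ hΦ_bdd
          hrho]
    _ = ∫ ω, h (X ω) ∂μ := by rw [h_zero, zero_add]

theorem integral_outcomeRegression_sub_eq_integral_sub [StandardBorelSpace Ω]
    [IsFiniteMeasure μ] {Y0 Y1 : Ω → ℝ} (hX : Measurable X) (hV : Measurable V)
    (hZ : Measurable Z) (hY0 : Measurable Y0) (hY1 : Measurable Y1)
    (hZ01 : ∀ ω, Z ω = 0 ∨ Z ω = 1) (hY0_int : Integrable Y0 μ) (hY1_int : Integrable Y1 μ)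
    (hY_int : Integrable Y μ) (hYdef : ∀ ω, Y ω = Z ω * Y1 ω + (1 - Z ω) * Y0 ω)
    {pi : 𝒳 × 𝒱 → ℝ} (hpiM : Measurable pi)
    (hpi : (fun ω => pi (X ω, V ω)) =ᵐ[μ]
      μ[Z | MeasurableSpace.comap (fun ω => (X ω, V ω)) inferInstance])
    (hA2 : CondIndepFun (MeasurableSpace.comap (fun ω => (X ω, V ω)) inferInstance)
      (measurable_iff_comap_le.mp (hX.prodMk hV)) Z (fun ω => (Y0 ω, Y1 ω)) μ)
    (hA3 : ∀ᵐ ω ∂μ, 0 < pi (X ω, V ω) ∧ pi (X ω, V ω) < 1)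
    (hmoM : Measurable mo) (hmo_bdd : ∀ p, |mo p| ≤ C)
    (hmo : (fun ω => mo (Z ω, X ω, V ω)) =ᵐ[μ]
      μ[Y | MeasurableSpace.comap (fun ω => (Z ω, X ω, V ω)) inferInstance]) :
    ∫ ω, (mo (1, X ω, V ω) - mo (0, X ω, V ω)) ∂μ = ∫ ω, (Y1 ω - Y0 ω) ∂μ := by
  have hXV : Measurable[MeasurableSpace.comap (fun ω => (X ω, V ω)) inferInstance]
      fun ω => (X ω, V ω) := comap_measurable _
  have hZXV : Measurable[MeasurableSpace.comap (fun ω => (Z ω, X ω, V ω)) inferInstance]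
      fun ω => (Z ω, X ω, V ω) := comap_measurable _
  have hPO : Measurable[MeasurableSpace.comap (fun ω => (Y0 ω, Y1 ω)) inferInstance]
      fun ω => (Y0 ω, Y1 ω) := comap_measurable _
  have hXV_le : MeasurableSpace.comap (fun ω => (X ω, V ω)) inferInstance
      ≤ MeasurableSpace.comap (fun ω => (Z ω, X ω, V ω)) inferInstance :=
    (measurable_snd.comp hZXV).comap_le
  have hZ_bdd : MemLp Z ∞ μ := memLp_top_of_bound hZ.aestronglyMeasurable 1
    (ae_of_all _ fun ω => by rcases hZ01 ω with h | h <;> simp [h])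
  have hmo_bdd' (z : ℝ) : MemLp (fun ω => mo (z, X ω, V ω)) ∞ μ :=
    memLp_top_comp_of_abs_le hmoM hmo_bdd (by fun_prop)
  have hmo_XV (z : ℝ) := ((by fun_prop : Measurable fun xv : 𝒳 × 𝒱 => mo (z, xv)).comp
    hXV).stronglyMeasurable
  have hpi_PO := hpi.trans
    (condExp_sup_comap_ae_eq_of_condIndepFun _ hZ hZ01 (hY0.prodMk hY1) hA2).symm
  have h_treated : ∫ ω, mo (1, X ω, V ω) ∂μ = ∫ ω, Y1 ω ∂μ := by
    refine integral_outcomeRegression_eq_integral_potentialOutcome hXV_le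
      (hZ.prodMk (hX.prodMk hV)).comap_le (hY0.prodMk hY1).comap_le
      (measurable_fst.comp hZXV).stronglyMeasurable (hpiM.comp hXV).stronglyMeasurable
      (hmo_XV 1) (measurable_snd.comp hPO).stronglyMeasurable hZ_bdd (hmo_bdd' 1) hY_int
      hY1_int ?_ ?_ hpi_PO (hA3.mono fun ω h => h.1)
    · ext ω; rcases hZ01 ω with h | h <;> simp [hYdef, h]
    · filter_upwards [hmo] with ω h
      rcases hZ01 ω with h0 | h0 <;> simp_all
  have h_control : ∫ ω, mo (0, X ω, V ω) ∂μ = ∫ ω, Y0 ω ∂μ := by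
    refine integral_outcomeRegression_eq_integral_potentialOutcome (ζ := fun ω => 1 - Z ω)
      (p := fun ω => 1 - pi (X ω, V ω)) hXV_le (hZ.prodMk (hX.prodMk hV)).comap_le
      (hY0.prodMk hY1).comap_le
      (stronglyMeasurable_const.sub (measurable_fst.comp hZXV).stronglyMeasurable)
      (stronglyMeasurable_const.sub (hpiM.comp hXV).stronglyMeasurable)
      (hmo_XV 0) (measurable_fst.comp hPO).stronglyMeasurable
      ((memLp_top_const 1).sub hZ_bdd) (hmo_bdd' 0) hY_int hY0_int ?_ ?_
      ((hpi_PO.fun_comp (1 - ·)).trans (condExp_one_sub_ae_eq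
        (sup_le (hX.prodMk hV).comap_le (hY0.prodMk hY1).comap_le) (hZ_bdd.integrable le_top)).symm)
      (hA3.mono fun ω h => sub_pos.mpr h.2)
    · ext ω; rcases hZ01 ω with h | h <;> simp [hYdef, h]
    · filter_upwards [hmo] with ω h
      rcases hZ01 ω with h0 | h0 <;> simp_all
  rw [integral_sub (hmo_bdd' 1 |>.integrable le_top) (hmo_bdd' 0 |>.integrable le_top),
    integral_sub hY1_int hY0_int, h_treated, h_control]

end PotentialOutcomes

theorem triply_robust_M3_general
    {Ω 𝒳 𝒱 : Type*}
    [MeasurableSpace Ω] [StandardBorelSpace Ω]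
    [MeasurableSpace 𝒳]
    [MeasurableSpace 𝒱]
    (μ : Measure Ω) [IsProbabilityMeasure μ]
    (X : Ω → 𝒳) (V : Ω → 𝒱) (Z R Y0 Y1 : Ω → ℝ)
    (hX : Measurable X) (hV : Measurable V) (hZ : Measurable Z)
    (hR : Measurable R) (hY0 : Measurable Y0) (hY1 : Measurable Y1)
    (hZ01 : ∀ ω, Z ω = 0 ∨ Z ω = 1) (hR01 : ∀ ω, R ω = 0 ∨ R ω = 1)
    (hYbd : ∃ C, ∀ ω, |Y0 ω| ≤ C ∧ |Y1 ω| ≤ C)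
    (Y : Ω → ℝ) (hYdef : ∀ ω, Y ω = Z ω * Y1 ω + (1 - Z ω) * Y0 ω)
    (pi : 𝒳 × 𝒱 → ℝ) (rho : 𝒳 → ℝ)
    (hpiM : Measurable pi) (hrhoM : Measurable rho)
    (hpi : (fun ω => pi (X ω, V ω)) =ᵐ[μ]
      μ[Z | MeasurableSpace.comap (fun ω => (X ω, V ω)) inferInstance])
    (hrho : (fun ω => rho (X ω)) =ᵐ[μ]
      μ[R | MeasurableSpace.comap X inferInstance])
    (hA1 : CondIndepFun (MeasurableSpace.comap X inferInstance)
      (measurable_iff_comap_le.mp hX) R (fun ω => (Y ω, Z ω, V ω)) μ)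
    (hA2 : CondIndepFun (MeasurableSpace.comap (fun ω => (X ω, V ω)) inferInstance)
      (measurable_iff_comap_le.mp (hX.prodMk hV)) Z (fun ω => (Y0 ω, Y1 ω)) μ)
    (hA3 : ∀ᵐ ω ∂μ, 0 < pi (X ω, V ω) ∧ pi (X ω, V ω) < 1)
    (mo : ℝ × 𝒳 × 𝒱 → ℝ) (hmoM : Measurable mo) (hmoBd : ∃ C, ∀ p, |mo p| ≤ C)
    (hmo : (fun ω => mo (Z ω, X ω, V ω)) =ᵐ[μ]
      μ[Y | MeasurableSpace.comap (fun ω => (Z ω, X ω, V ω)) inferInstance])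
    (ε ε' : ℝ) (hε : 0 < ε) (hε' : 0 < ε')
    (pistar : 𝒳 × 𝒱 → ℝ) (hpistarM : Measurable pistar)
    (hpistarRange : ∀ p, ε ≤ pistar p ∧ pistar p ≤ 1 - ε)
    (rhostar : 𝒳 → ℝ) (hrhostarM : Measurable rhostar)
    (hrhostarRange : ∀ x, ε' ≤ rhostar x ∧ rhostar x ≤ 1)
    (h : 𝒳 → ℝ) (hhM : Measurable h)
    (hh : (fun ω => h (X ω)) =ᵐ[μ]
      μ[(fun ω => mo (1, X ω, V ω) - mo (0, X ω, V ω)) |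
        MeasurableSpace.comap X inferInstance]) :
    ∫ ω, (R ω / rhostar (X ω)) *
          ((Z ω / pistar (X ω, V ω)) * (Y ω - mo (1, X ω, V ω))
            - ((1 - Z ω) / (1 - pistar (X ω, V ω))) * (Y ω - mo (0, X ω, V ω))
            + mo (1, X ω, V ω) - mo (0, X ω, V ω) - h (X ω))
        + h (X ω) ∂μ
      = ∫ ω, (Y1 ω - Y0 ω) ∂μ := by
  obtain ⟨C, hC⟩ := hYbd
  obtain ⟨C', hC'⟩ := hmoBd
  have hY : Measurable Y := by
    rw [show Y = fun ω => Z ω * Y1 ω + (1 - Z ω) * Y0 ω from funext hYdef]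
    fun_prop
  have hY_bdd : MemLp Y ∞ μ := memLp_top_of_bound hY.aestronglyMeasurable C
    (ae_of_all _ fun ω => by rcases hZ01 ω with h | h <;> simp [hYdef, h, hC ω])
  have hY0_int : Integrable Y0 μ :=
    (memLp_top_of_bound hY0.aestronglyMeasurable C (ae_of_all _ fun ω => (hC ω).1)).integrable
      le_top
  have hY1_int : Integrable Y1 μ :=
    (memLp_top_of_bound hY1.aestronglyMeasurable C (ae_of_all _ fun ω => (hC ω).2)).integrable
      le_top
  calc _ = ∫ ω, h (X ω) ∂μ :=
        integral_triplyRobust_eq_integral_imputation hX hV hZ hR hY hZ01 hR01 hY_bdd hrhoM hrho hA1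
          hmoM hC' hmo hε hε' hpistarM hpistarRange hrhostarM (fun x => (hrhostarRange x).1)
          hhM hh
    _ = ∫ ω, (mo (1, X ω, V ω) - mo (0, X ω, V ω)) ∂μ := by
        rw [integral_congr_ae hh, integral_condExp hX.comap_le]
    _ = ∫ ω, (Y1 ω - Y0 ω) ∂μ :=
        integral_outcomeRegression_sub_eq_integral_sub hX hV hZ hY0 hY1 hZ01 hY0_int hY1_int
          (hY_bdd.integrable le_top) hYdef hpiM hpi hA2 hA3 hmoM hC' hmo

theorem triply_robust_M3
    {Ω 𝒳 𝒱 : Type*}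
    [MeasurableSpace Ω] [StandardBorelSpace Ω] [Nonempty Ω]
    [MeasurableSpace 𝒳] [StandardBorelSpace 𝒳]
    [MeasurableSpace 𝒱] [StandardBorelSpace 𝒱]
    (μ : Measure Ω) [IsProbabilityMeasure μ]
    (X : Ω → 𝒳) (V : Ω → 𝒱) (Z R Y0 Y1 : Ω → ℝ)
    (hX : Measurable X) (hV : Measurable V) (hZ : Measurable Z)
    (hR : Measurable R) (hY0 : Measurable Y0) (hY1 : Measurable Y1)
    (hZ01 : ∀ ω, Z ω = 0 ∨ Z ω = 1) (hR01 : ∀ ω, R ω = 0 ∨ R ω = 1)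
    (hYbd : ∃ C, ∀ ω, |Y0 ω| ≤ C ∧ |Y1 ω| ≤ C)
    (Y : Ω → ℝ) (hYdef : ∀ ω, Y ω = Z ω * Y1 ω + (1 - Z ω) * Y0 ω)
    (pi : 𝒳 × 𝒱 → ℝ) (rho : 𝒳 → ℝ)
    (hpiM : Measurable pi) (hrhoM : Measurable rho)
    (hpi : (fun ω => pi (X ω, V ω)) =ᵐ[μ]
      μ[Z | MeasurableSpace.comap (fun ω => (X ω, V ω)) inferInstance])
    (hrho : (fun ω => rho (X ω)) =ᵐ[μ]
      μ[R | MeasurableSpace.comap X inferInstance])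
    (hA1 : CondIndepFun (MeasurableSpace.comap X inferInstance)
      (measurable_iff_comap_le.mp hX) R (fun ω => (Y ω, Z ω, V ω)) μ)
    (hA2 : CondIndepFun (MeasurableSpace.comap (fun ω => (X ω, V ω)) inferInstance)
      (measurable_iff_comap_le.mp (hX.prodMk hV)) Z (fun ω => (Y0 ω, Y1 ω)) μ)
    (hA3 : ∀ᵐ ω ∂μ, 0 < pi (X ω, V ω) ∧ pi (X ω, V ω) < 1)
    (hA4 : ∀ᵐ ω ∂μ, 0 < rho (X ω))
    (mo : ℝ × 𝒳 × 𝒱 → ℝ) (hmoM : Measurable mo) (hmoBd : ∃ C, ∀ p, |mo p| ≤ C)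
    (hmo : (fun ω => mo (Z ω, X ω, V ω)) =ᵐ[μ]
      μ[Y | MeasurableSpace.comap (fun ω => (Z ω, X ω, V ω)) inferInstance])
    (ε ε' : ℝ) (hε : 0 < ε) (hε' : 0 < ε')
    (pistar : 𝒳 × 𝒱 → ℝ) (hpistarM : Measurable pistar)
    (hpistarRange : ∀ p, ε ≤ pistar p ∧ pistar p ≤ 1 - ε)
    (rhostar : 𝒳 → ℝ) (hrhostarM : Measurable rhostar)
    (hrhostarRange : ∀ x, ε' ≤ rhostar x ∧ rhostar x ≤ 1)
    (h : 𝒳 → ℝ) (hhM : Measurable h)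
    (hh : (fun ω => h (X ω)) =ᵐ[μ]
      μ[(fun ω => mo (1, X ω, V ω) - mo (0, X ω, V ω)) |
        MeasurableSpace.comap X inferInstance]) :
    ∫ ω, (R ω / rhostar (X ω)) *
          ((Z ω / pistar (X ω, V ω)) * (Y ω - mo (1, X ω, V ω))
            - ((1 - Z ω) / (1 - pistar (X ω, V ω))) * (Y ω - mo (0, X ω, V ω))
            + mo (1, X ω, V ω) - mo (0, X ω, V ω) - h (X ω))
        + h (X ω) ∂μ
      = ∫ ω, (Y1 ω - Y0 ω) ∂μ :=
  triply_robust_M3_general μ X V Z R Y0 Y1 hX hV hZ hR hY0 hY1 hZ01 hR01 hYbd Y hYdef pi rho hpiM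
    hrhoM hpi hrho hA1 hA2 hA3 mo hmoM hmoBd hmo ε ε' hε hε' pistar hpistarM hpistarRange rhostar
    hrhostarM hrhostarRange h hhM hh
end

section
/- (Proposition 2(a), identification of the causal risk ratio via selection probability and propensity score) Under Assumptions (A1)–(A4) and E[Y0] ≠ 0, one has E[(R/ρ(X))·((1−Z)/(1−π(X,V)))·Y] ≠ 0 and ξ = E[(R/ρ(X))·(Z/π(X,V))·Y] / E[(R/ρ(X))·((1−Z)/(1−π(X,V)))·Y]. -/
open MeasureTheory ProbabilityTheory

open MeasurableSpace Set
open scoped ENNReal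

/-!
If a `{0,1}`-valued `R` is conditionally independent of `g` given `m`, then `R` and `μ[R | m]`
have the same integrals over the π-system of sets `s ∩ g⁻¹' t` (`s ∈ m`) generating
`m ⊔ σ(g)`, so `R` may be replaced by `μ[R | m]` in front of any nonnegative
`m ⊔ σ(g)`-measurable integrand. Used with (A1) this removes the weight `R / ρ(X)`, and then,
since `Z · h(Y) = Z · h(Y₁)`, with (A2) it removes `Z / π(X, V)`: `Y₁` has the same law under
`μ` reweighted by `R/ρ(X) · Z/π(X,V)` as under `μ`. Equal laws give equal means even for
unbounded weights, so the numerator is `E[Y₁]`; likewise the denominator is `E[Y₀]`.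
-/

theorem nonneg_of_eq_zero_or_eq_one {x : ℝ} (hx : x = 0 ∨ x = 1) : 0 ≤ x := by
  rcases hx with rfl | rfl <;> norm_num

theorem integrable_of_forall_eq_zero_or_eq_one {Ω : Type*} [MeasurableSpace Ω] {μ : Measure Ω}
    [IsFiniteMeasure μ] {f : Ω → ℝ} (hf : Measurable f) (h01 : ∀ ω, f ω = 0 ∨ f ω = 1) :
    Integrable f μ :=
  .of_bound hf.aestronglyMeasurable 1 (.of_forall fun ω => by rcases h01 ω with h | h <;> simp [h])

theorem condExp_const_sub {Ω : Type*} {m mΩ : MeasurableSpace Ω} {μ : Measure Ω}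
    [IsFiniteMeasure μ] (hm : m ≤ mΩ) (c : ℝ) {f : Ω → ℝ} (hf : Integrable f μ) :
    μ[fun ω => c - f ω | m] =ᵐ[μ] fun ω => c - μ[f|m] ω := by
  have := condExp_sub (integrable_const c) hf m
  rwa [condExp_const hm] at this

theorem integral_mul_eq_of_map_withDensity_eq {Ω : Type*} [MeasurableSpace Ω] {μ : Measure Ω}
    {w f : Ω → ℝ} (hw : Measurable w) (hw0 : 0 ≤ᵐ[μ] w) (hf : Measurable f)
    (h : (μ.withDensity fun ω => ENNReal.ofReal (w ω)).map f = μ.map f) :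
    ∫ ω, w ω * f ω ∂μ = ∫ ω, f ω ∂μ := by
  calc ∫ ω, w ω * f ω ∂μ = ∫ ω, f ω ∂μ.withDensity fun ω => ENNReal.ofReal (w ω) := by
        rw [integral_withDensity_eq_integral_toReal_smul hw.ennreal_ofReal
          (.of_forall fun _ => ENNReal.ofReal_lt_top)]
        exact integral_congr_ae (hw0.mono fun ω h => by simp [ENNReal.toReal_ofReal h])
    _ = ∫ y, y ∂(μ.withDensity fun ω => ENNReal.ofReal (w ω)).map f :=
        (integral_map hf.aemeasurable aestronglyMeasurable_id).symm
    _ = ∫ ω, f ω ∂μ := by rw [h]; exact integral_map hf.aemeasurable aestronglyMeasurable_id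

section PiSystem

variable {Ω : Type*}

theorem isPiSystem_image2_inter_measurableSet (m₁ m₂ : MeasurableSpace Ω) :
    IsPiSystem (image2 (· ∩ ·) {s | MeasurableSet[m₁] s} {t | MeasurableSet[m₂] t}) := by
  rintro _ ⟨s₁, hs₁, t₁, ht₁, rfl⟩ _ ⟨s₂, hs₂, t₂, ht₂, rfl⟩ -
  exact ⟨s₁ ∩ s₂, hs₁.inter hs₂, t₁ ∩ t₂, ht₁.inter ht₂, inter_inter_inter_comm _ _ _ _⟩

theorem generateFrom_image2_inter_measurableSet (m₁ m₂ : MeasurableSpace Ω) :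
    generateFrom (image2 (· ∩ ·) {s | MeasurableSet[m₁] s} {t | MeasurableSet[m₂] t}) =
      m₁ ⊔ m₂ := by
  refine le_antisymm (generateFrom_le ?_) (sup_le (fun s hs => ?_) (fun t ht => ?_))
  · rintro _ ⟨s, hs, t, ht, rfl⟩
    exact (le_sup_left (b := m₂) s hs).inter (le_sup_right (a := m₁) t ht)
  · exact measurableSet_generateFrom ⟨s, hs, univ, .univ, inter_univ s⟩
  · exact measurableSet_generateFrom ⟨univ, .univ, t, ht, univ_inter t⟩

end PiSystem

section CondIndep

variable {Ω β : Type*} {m mΩ : MeasurableSpace Ω} [StandardBorelSpace Ω] {hm : m ≤ mΩ}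
  {mβ : MeasurableSpace β} {μ : Measure Ω} [IsFiniteMeasure μ] {R : Ω → ℝ} {g : Ω → β}

theorem setIntegral_inter_preimage_condExp_eq_of_condIndepFun (hR : Measurable R)
    (hR01 : ∀ ω, R ω = 0 ∨ R ω = 1) (hg : Measurable g) (hRg : CondIndepFun m hm R g μ)
    {s : Set Ω} (hs : MeasurableSet[m] s) {t : Set β} (ht : MeasurableSet t) :
    ∫ ω in s ∩ g ⁻¹' t, (μ[R|m]) ω ∂μ = ∫ ω in s ∩ g ⁻¹' t, R ω ∂μ := by
  set A := R ⁻¹' {1}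
  set B := g ⁻¹' t
  have hA : MeasurableSet A := hR (measurableSet_singleton 1)
  have hB : MeasurableSet B := hg ht
  have hRA : R = A.indicator fun _ => 1 := by
    ext ω
    rcases hR01 ω with h | h <;> simp [A, h]
  have hmulB : μ[R|m] * B.indicator (fun _ => 1) = B.indicator μ[R|m] := by
    ext ω
    by_cases h : ω ∈ B <;> simp [h]
  have hmulB_int : Integrable (μ[R|m] * B.indicator (fun _ => 1)) μ :=
    hmulB ▸ integrable_condExp.indicator hB
  have hprod : μ⟦A ∩ B | m⟧ =ᵐ[μ] μ[R|m] * μ⟦B | m⟧ := by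
    rw [hRA]
    exact (condIndepFun_iff_condExp_inter_preimage_eq_mul hR hg).1 hRg {1} t
      (measurableSet_singleton 1) ht
  have hpull : μ[μ[R|m] * B.indicator (fun _ => 1) | m] =ᵐ[μ] μ[R|m] * μ⟦B | m⟧ :=
    condExp_mul_of_stronglyMeasurable_left stronglyMeasurable_condExp
      hmulB_int ((integrable_const 1).indicator hB)
  calc ∫ ω in s ∩ B, (μ[R|m]) ω ∂μ
      = ∫ ω in s, (μ[μ[R|m] * B.indicator (fun _ => 1) | m]) ω ∂μ := by
        rw [setIntegral_condExp hm hmulB_int hs, hmulB,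
          setIntegral_indicator hB]
    _ = ∫ ω in s, (μ⟦A ∩ B | m⟧) ω ∂μ :=
        setIntegral_congr_ae (hm s hs) ((hpull.trans hprod.symm).mono fun _ h _ => h)
    _ = ∫ ω in s ∩ B, R ω ∂μ := by
        rw [setIntegral_condExp hm ((integrable_const 1).indicator (hA.inter hB)) hs,
          inter_comm, ← indicator_indicator, setIntegral_indicator hB, ← hRA]

theorem withDensity_ofReal_condExp_eq_of_condIndepFun (hR : Measurable R)
    (hR01 : ∀ ω, R ω = 0 ∨ R ω = 1) (hg : Measurable g) (hRg : CondIndepFun m hm R g μ)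
    {u : Set Ω} (hu : MeasurableSet[m ⊔ mβ.comap g] u) :
    μ.withDensity (fun ω => ENNReal.ofReal (μ[R|m] ω)) u =
      μ.withDensity (fun ω => ENNReal.ofReal (R ω)) u := by
  have hRint : Integrable R μ := integrable_of_forall_eq_zero_or_eq_one hR hR01
  have hR0 : 0 ≤ᵐ[μ] R := .of_forall fun ω => nonneg_of_eq_zero_or_eq_one (hR01 ω)
  have hcondR0 : 0 ≤ᵐ[μ] μ[R|m] := condExp_nonneg hR0
  have : IsFiniteMeasure (μ.withDensity fun ω => ENNReal.ofReal (μ[R|m] ω)) :=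
    isFiniteMeasure_withDensity_ofReal integrable_condExp.2
  refine ext_on_measurableSpace_of_generate_finite mΩ _ ?_ (sup_le hm hg.comap_le)
    (generateFrom_image2_inter_measurableSet m (mβ.comap g)).symm
    (isPiSystem_image2_inter_measurableSet m (mβ.comap g)) ?_ hu
  · rintro _ ⟨s, hs, _, ⟨t, ht, rfl⟩, rfl⟩
    have hst : MeasurableSet (s ∩ g ⁻¹' t) := (hm s hs).inter (hg ht)
    rw [withDensity_apply _ hst, withDensity_apply _ hst,
      ← ofReal_integral_eq_lintegral_ofReal integrable_condExp.restrict
        (ae_restrict_of_ae hcondR0),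
      ← ofReal_integral_eq_lintegral_ofReal hRint.restrict (ae_restrict_of_ae hR0),
      setIntegral_inter_preimage_condExp_eq_of_condIndepFun hR hR01 hg hRg hs ht]
  · rw [withDensity_apply _ .univ, withDensity_apply _ .univ, Measure.restrict_univ,
      ← ofReal_integral_eq_lintegral_ofReal integrable_condExp hcondR0,
      ← ofReal_integral_eq_lintegral_ofReal hRint hR0, integral_condExp hm]

theorem lintegral_ofReal_condExp_mul_eq_of_condIndepFun (hR : Measurable R)
    (hR01 : ∀ ω, R ω = 0 ∨ R ω = 1) (hg : Measurable g) (hRg : CondIndepFun m hm R g μ)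
    {k : Ω → ℝ≥0∞} (hk : Measurable[m ⊔ mβ.comap g] k) :
    ∫⁻ ω, ENNReal.ofReal (μ[R|m] ω) * k ω ∂μ = ∫⁻ ω, ENNReal.ofReal (R ω) * k ω ∂μ := by
  have hle : m ⊔ mβ.comap g ≤ mΩ := sup_le hm hg.comap_le
  have htrim : (μ.withDensity fun ω => ENNReal.ofReal (μ[R|m] ω)).trim hle =
      (μ.withDensity fun ω => ENNReal.ofReal (R ω)).trim hle := by
    refine @Measure.ext _ (m ⊔ mβ.comap g) _ _ fun u hu => ?_
    rw [trim_measurableSet_eq hle hu, trim_measurableSet_eq hle hu]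
    exact withDensity_ofReal_condExp_eq_of_condIndepFun hR hR01 hg hRg hu
  have hcondm : Measurable fun ω => ENNReal.ofReal (μ[R|m] ω) :=
    (stronglyMeasurable_condExp.measurable.mono hm le_rfl).ennreal_ofReal
  calc ∫⁻ ω, ENNReal.ofReal (μ[R|m] ω) * k ω ∂μ
      = ∫⁻ ω, k ω ∂(μ.withDensity fun ω => ENNReal.ofReal (μ[R|m] ω)).trim hle := by
        rw [lintegral_trim hle hk,
          lintegral_withDensity_eq_lintegral_mul _ hcondm (hk.mono hle le_rfl)]
        rfl
    _ = ∫⁻ ω, ENNReal.ofReal (R ω) * k ω ∂μ := by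
        rw [htrim, lintegral_trim hle hk,
          lintegral_withDensity_eq_lintegral_mul _ hR.ennreal_ofReal (hk.mono hle le_rfl)]
        rfl

theorem lintegral_ofReal_div_mul_eq_of_condIndepFun (hR : Measurable R)
    (hR01 : ∀ ω, R ω = 0 ∨ R ω = 1) (hg : Measurable g) (hRg : CondIndepFun m hm R g μ)
    {ρ : Ω → ℝ} (hρm : Measurable[m] ρ) (hρ : ρ =ᵐ[μ] μ[R|m]) (hρpos : ∀ᵐ ω ∂μ, 0 < ρ ω)
    {k : Ω → ℝ≥0∞} (hk : Measurable[m ⊔ mβ.comap g] k) :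
    ∫⁻ ω, ENNReal.ofReal (R ω / ρ ω) * k ω ∂μ = ∫⁻ ω, k ω ∂μ := by
  calc ∫⁻ ω, ENNReal.ofReal (R ω / ρ ω) * k ω ∂μ
      = ∫⁻ ω, ENNReal.ofReal (R ω) * (ENNReal.ofReal (ρ ω)⁻¹ * k ω) ∂μ := by
        simp_rw [div_eq_mul_inv, ENNReal.ofReal_mul (nonneg_of_eq_zero_or_eq_one (hR01 _)),
          mul_assoc]
    _ = ∫⁻ ω, ENNReal.ofReal (ρ ω) * (ENNReal.ofReal (ρ ω)⁻¹ * k ω) ∂μ := by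
        rw [← lintegral_ofReal_condExp_mul_eq_of_condIndepFun hR hR01 hg hRg
          (k := fun ω => ENNReal.ofReal (ρ ω)⁻¹ * k ω)
          ((hρm.mono le_sup_left le_rfl).inv.ennreal_ofReal.mul hk)]
        exact lintegral_congr_ae (by filter_upwards [hρ] with ω hω; rw [hω])
    _ = ∫⁻ ω, k ω ∂μ := by
        refine lintegral_congr_ae ?_
        filter_upwards [hρpos] with ω hω
        rw [← mul_assoc, ← ENNReal.ofReal_mul hω.le, mul_inv_cancel₀ hω.ne', ENNReal.ofReal_one,
          one_mul]

end CondIndep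

section InverseProbabilityWeighting

variable {Ω 𝒳 𝒱 β : Type*} [MeasurableSpace Ω] [StandardBorelSpace Ω] [MeasurableSpace 𝒳]
  [MeasurableSpace 𝒱] [MeasurableSpace β] {μ : Measure Ω} [IsFiniteMeasure μ]
  {X : Ω → 𝒳} {V : Ω → 𝒱} {R T : Ω → ℝ} {Y Yt : Ω → β} {ρ : 𝒳 → ℝ} {p : 𝒳 × 𝒱 → ℝ}

theorem map_withDensity_ipw_eq_map (hX : Measurable X) (hV : Measurable V) (hR : Measurable R)
    (hT : Measurable T) (hY : Measurable Y) (hYt : Measurable Yt) (hρm : Measurable ρ)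
    (hpm : Measurable p) (hR01 : ∀ ω, R ω = 0 ∨ R ω = 1) (hT01 : ∀ ω, T ω = 0 ∨ T ω = 1)
    (hρ : (fun ω => ρ (X ω)) =ᵐ[μ] μ[R | MeasurableSpace.comap X inferInstance])
    (hp : (fun ω => p (X ω, V ω)) =ᵐ[μ]
      μ[T | MeasurableSpace.comap (fun ω => (X ω, V ω)) inferInstance])
    (hRind : CondIndepFun (MeasurableSpace.comap X inferInstance) hX.comap_le R
      (fun ω => (Y ω, T ω, V ω)) μ)
    (hTind : CondIndepFun (MeasurableSpace.comap (fun ω => (X ω, V ω)) inferInstance)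
      (hX.prodMk hV).comap_le T Yt μ)
    (hρpos : ∀ᵐ ω ∂μ, 0 < ρ (X ω)) (hppos : ∀ᵐ ω ∂μ, 0 < p (X ω, V ω))
    (hYt1 : ∀ ω, T ω = 1 → Y ω = Yt ω) :
    (μ.withDensity fun ω => ENNReal.ofReal (R ω / ρ (X ω) * (T ω / p (X ω, V ω)))).map Yt =
      μ.map Yt := by
  refine Measure.ext_of_lintegral _ fun h hh => ?_
  have hswap : ∀ ω, ENNReal.ofReal (T ω / p (X ω, V ω)) * h (Y ω) =
      ENNReal.ofReal (T ω / p (X ω, V ω)) * h (Yt ω) :=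
    fun ω => by
      rcases hT01 ω with hT0 | hT1
      · simp [hT0]
      · rw [hYt1 ω hT1]
  have hk : Measurable[MeasurableSpace.comap X inferInstance ⊔
      MeasurableSpace.comap (fun ω => (Y ω, T ω, V ω)) inferInstance]
      fun ω => ENNReal.ofReal (T ω / p (X ω, V ω)) * h (Y ω) := by
    rw [← MeasurableSpace.comap_prodMk]
    exact (show Measurable fun q : 𝒳 × β × ℝ × 𝒱 =>
      ENNReal.ofReal (q.2.2.1 / p (q.1, q.2.2.2)) * h q.2.1 by fun_prop).comp
        (comap_measurable _)
  rw [lintegral_map hh hYt, lintegral_map hh hYt]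
  refine (lintegral_withDensity_eq_lintegral_mul _ (by fun_prop) (hh.comp hYt)).trans ?_
  calc ∫⁻ ω, ENNReal.ofReal (R ω / ρ (X ω) * (T ω / p (X ω, V ω))) * h (Yt ω) ∂μ
      = ∫⁻ ω, ENNReal.ofReal (R ω / ρ (X ω)) *
          (ENNReal.ofReal (T ω / p (X ω, V ω)) * h (Y ω)) ∂μ := by
        refine lintegral_congr_ae ?_
        filter_upwards [hρpos] with ω hω
        rw [ENNReal.ofReal_mul (div_nonneg (nonneg_of_eq_zero_or_eq_one (hR01 ω)) hω.le),
          mul_assoc, hswap]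
    _ = ∫⁻ ω, ENNReal.ofReal (T ω / p (X ω, V ω)) * h (Y ω) ∂μ :=
        lintegral_ofReal_div_mul_eq_of_condIndepFun hR hR01 (hY.prodMk (hT.prodMk hV)) hRind
          (hρm.comp (comap_measurable X)) hρ hρpos hk
    _ = ∫⁻ ω, ENNReal.ofReal (T ω / p (X ω, V ω)) * h (Yt ω) ∂μ := by simp_rw [hswap]
    _ = ∫⁻ ω, h (Yt ω) ∂μ :=
        lintegral_ofReal_div_mul_eq_of_condIndepFun hT hT01 hYt hTind
          (hpm.comp (comap_measurable _)) hp hppos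
          ((hh.comp (comap_measurable Yt)).mono le_sup_right le_rfl)

theorem integral_ipw_eq {Y Yt : Ω → ℝ} (hX : Measurable X) (hV : Measurable V)
    (hR : Measurable R) (hT : Measurable T) (hY : Measurable Y) (hYt : Measurable Yt)
    (hρm : Measurable ρ) (hpm : Measurable p) (hR01 : ∀ ω, R ω = 0 ∨ R ω = 1)
    (hT01 : ∀ ω, T ω = 0 ∨ T ω = 1)
    (hρ : (fun ω => ρ (X ω)) =ᵐ[μ] μ[R | MeasurableSpace.comap X inferInstance])
    (hp : (fun ω => p (X ω, V ω)) =ᵐ[μ]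
      μ[T | MeasurableSpace.comap (fun ω => (X ω, V ω)) inferInstance])
    (hRind : CondIndepFun (MeasurableSpace.comap X inferInstance) hX.comap_le R
      (fun ω => (Y ω, T ω, V ω)) μ)
    (hTind : CondIndepFun (MeasurableSpace.comap (fun ω => (X ω, V ω)) inferInstance)
      (hX.prodMk hV).comap_le T Yt μ)
    (hρpos : ∀ᵐ ω ∂μ, 0 < ρ (X ω)) (hppos : ∀ᵐ ω ∂μ, 0 < p (X ω, V ω))
    (hYt1 : ∀ ω, T ω = 1 → Y ω = Yt ω) :
    ∫ ω, R ω / ρ (X ω) * (T ω / p (X ω, V ω)) * Y ω ∂μ = ∫ ω, Yt ω ∂μ := by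
  have hw0 : ∀ᵐ ω ∂μ, 0 ≤ R ω / ρ (X ω) * (T ω / p (X ω, V ω)) := by
    filter_upwards [hρpos, hppos] with ω hρω hpω
    exact mul_nonneg (div_nonneg (nonneg_of_eq_zero_or_eq_one (hR01 ω)) hρω.le)
      (div_nonneg (nonneg_of_eq_zero_or_eq_one (hT01 ω)) hpω.le)
  calc ∫ ω, R ω / ρ (X ω) * (T ω / p (X ω, V ω)) * Y ω ∂μ
      = ∫ ω, R ω / ρ (X ω) * (T ω / p (X ω, V ω)) * Yt ω ∂μ :=
        integral_congr_ae (.of_forall fun ω => by rcases hT01 ω with h | h <;> simp [h, hYt1])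
    _ = ∫ ω, Yt ω ∂μ := integral_mul_eq_of_map_withDensity_eq (by fun_prop) hw0 hYt
        (map_withDensity_ipw_eq_map hX hV hR hT hY hYt hρm hpm hR01 hT01 hρ hp hRind hTind
          hρpos hppos hYt1)

end InverseProbabilityWeighting

theorem crr_identification_ipw_general
    {Ω 𝒳 𝒱 : Type*}
    [MeasurableSpace Ω] [StandardBorelSpace Ω]
    [MeasurableSpace 𝒳]
    [MeasurableSpace 𝒱]
    (μ : Measure Ω) [IsProbabilityMeasure μ]
    (X : Ω → 𝒳) (V : Ω → 𝒱) (Z R Y0 Y1 : Ω → ℝ)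
    (hX : Measurable X) (hV : Measurable V) (hZ : Measurable Z)
    (hR : Measurable R) (hY0 : Measurable Y0) (hY1 : Measurable Y1)
    (hZ01 : ∀ ω, Z ω = 0 ∨ Z ω = 1) (hR01 : ∀ ω, R ω = 0 ∨ R ω = 1)
    (Y : Ω → ℝ) (hYdef : ∀ ω, Y ω = Z ω * Y1 ω + (1 - Z ω) * Y0 ω)
    (pi : 𝒳 × 𝒱 → ℝ) (rho : 𝒳 → ℝ)
    (hpiM : Measurable pi) (hrhoM : Measurable rho)
    (hpi : (fun ω => pi (X ω, V ω)) =ᵐ[μ]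
      μ[Z | MeasurableSpace.comap (fun ω => (X ω, V ω)) inferInstance])
    (hrho : (fun ω => rho (X ω)) =ᵐ[μ]
      μ[R | MeasurableSpace.comap X inferInstance])
    (hA1 : CondIndepFun (MeasurableSpace.comap X inferInstance)
      (measurable_iff_comap_le.mp hX) R (fun ω => (Y ω, Z ω, V ω)) μ)
    (hA2 : CondIndepFun (MeasurableSpace.comap (fun ω => (X ω, V ω)) inferInstance)
      (measurable_iff_comap_le.mp (hX.prodMk hV)) Z (fun ω => (Y0 ω, Y1 ω)) μ)
    (hA3 : ∀ᵐ ω ∂μ, 0 < pi (X ω, V ω) ∧ pi (X ω, V ω) < 1)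
    (hA4 : ∀ᵐ ω ∂μ, 0 < rho (X ω))
    (hY0ne : ∫ ω, Y0 ω ∂μ ≠ 0) :
    (∫ ω, (R ω / rho (X ω)) * ((1 - Z ω) / (1 - pi (X ω, V ω))) * Y ω ∂μ ≠ 0) ∧
    (∫ ω, Y1 ω ∂μ) / (∫ ω, Y0 ω ∂μ)
      = (∫ ω, (R ω / rho (X ω)) * (Z ω / pi (X ω, V ω)) * Y ω ∂μ)
        / ∫ ω, (R ω / rho (X ω)) * ((1 - Z ω) / (1 - pi (X ω, V ω))) * Y ω ∂μ := by
  have hY : Measurable Y := by rw [funext hYdef]; fun_prop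
  have hZint : Integrable Z μ := integrable_of_forall_eq_zero_or_eq_one hZ hZ01
  have hnum : ∫ ω, (R ω / rho (X ω)) * (Z ω / pi (X ω, V ω)) * Y ω ∂μ = ∫ ω, Y1 ω ∂μ :=
    integral_ipw_eq hX hV hR hZ hY hY1 hrhoM hpiM hR01 hZ01 hrho hpi hA1
      (hA2.comp measurable_id measurable_snd) hA4 (hA3.mono fun _ h => h.1)
      (fun ω h => by simp [hYdef, h])
  have hden : ∫ ω, (R ω / rho (X ω)) * ((1 - Z ω) / (1 - pi (X ω, V ω))) * Y ω ∂μ =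
      ∫ ω, Y0 ω ∂μ :=
    integral_ipw_eq (T := fun ω => 1 - Z ω) (p := fun q => 1 - pi q) hX hV hR (by fun_prop) hY
      hY0 hrhoM (by fun_prop) hR01
      (fun ω => by rcases hZ01 ω with h | h <;> simp [h]) hrho
      (by filter_upwards [hpi, condExp_const_sub (hX.prodMk hV).comap_le 1 hZint] with ω h1 h2
          rw [h2, h1])
      (hA1.comp measurable_id
        (by fun_prop : Measurable fun q : ℝ × ℝ × 𝒱 => (q.1, 1 - q.2.1, q.2.2)))
      (hA2.comp (measurable_const.sub measurable_id) measurable_fst) hA4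
      (hA3.mono fun _ h => sub_pos.2 h.2) (fun ω h => by simp [hYdef, show Z ω = 0 by linarith])
  exact ⟨hden ▸ hY0ne, by rw [hnum, hden]⟩

theorem crr_identification_ipw
    {Ω 𝒳 𝒱 : Type*}
    [MeasurableSpace Ω] [StandardBorelSpace Ω] [Nonempty Ω]
    [MeasurableSpace 𝒳] [StandardBorelSpace 𝒳]
    [MeasurableSpace 𝒱] [StandardBorelSpace 𝒱]
    (μ : Measure Ω) [IsProbabilityMeasure μ]
    (X : Ω → 𝒳) (V : Ω → 𝒱) (Z R Y0 Y1 : Ω → ℝ)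
    (hX : Measurable X) (hV : Measurable V) (hZ : Measurable Z)
    (hR : Measurable R) (hY0 : Measurable Y0) (hY1 : Measurable Y1)
    (hZ01 : ∀ ω, Z ω = 0 ∨ Z ω = 1) (hR01 : ∀ ω, R ω = 0 ∨ R ω = 1)
    (hYbd : ∃ C, ∀ ω, |Y0 ω| ≤ C ∧ |Y1 ω| ≤ C)
    (Y : Ω → ℝ) (hYdef : ∀ ω, Y ω = Z ω * Y1 ω + (1 - Z ω) * Y0 ω)
    (pi : 𝒳 × 𝒱 → ℝ) (rho : 𝒳 → ℝ)
    (hpiM : Measurable pi) (hrhoM : Measurable rho)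
    (hpi : (fun ω => pi (X ω, V ω)) =ᵐ[μ]
      μ[Z | MeasurableSpace.comap (fun ω => (X ω, V ω)) inferInstance])
    (hrho : (fun ω => rho (X ω)) =ᵐ[μ]
      μ[R | MeasurableSpace.comap X inferInstance])
    (hA1 : CondIndepFun (MeasurableSpace.comap X inferInstance)
      (measurable_iff_comap_le.mp hX) R (fun ω => (Y ω, Z ω, V ω)) μ)
    (hA2 : CondIndepFun (MeasurableSpace.comap (fun ω => (X ω, V ω)) inferInstance)
      (measurable_iff_comap_le.mp (hX.prodMk hV)) Z (fun ω => (Y0 ω, Y1 ω)) μ)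
    (hA3 : ∀ᵐ ω ∂μ, 0 < pi (X ω, V ω) ∧ pi (X ω, V ω) < 1)
    (hA4 : ∀ᵐ ω ∂μ, 0 < rho (X ω))
    (hY0ne : ∫ ω, Y0 ω ∂μ ≠ 0) :
    (∫ ω, (R ω / rho (X ω)) * ((1 - Z ω) / (1 - pi (X ω, V ω))) * Y ω ∂μ ≠ 0) ∧
    (∫ ω, Y1 ω ∂μ) / (∫ ω, Y0 ω ∂μ)
      = (∫ ω, (R ω / rho (X ω)) * (Z ω / pi (X ω, V ω)) * Y ω ∂μ)
        / ∫ ω, (R ω / rho (X ω)) * ((1 - Z ω) / (1 - pi (X ω, V ω))) * Y ω ∂μ :=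
  crr_identification_ipw_general μ X V Z R Y0 Y1 hX hV hZ hR hY0 hY1 hZ01 hR01 Y hYdef pi rho hpiM
    hrhoM hpi hrho hA1 hA2 hA3 hA4 hY0ne
end
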